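/- arXiv:2110.02941 — 9 statements merged into one kernel-verified Lean document; each statement's English description precedes it below -/
import Mathlib

section
/- Let P be a finite elementary abelian p-group, E a subgroup of Aut(P) whose action on P is Frobenius, and G = P⋊E. Then the conjugation action of P on the set G∖P is free (no nonidentity element of P fixes any element of G∖P under conjugation), and consequently the group cohomology H^n(P; k[G∖P]) vanishes for all n ≥ 1, where k[G∖P] denotes the k-linear span of G∖P inside kG, regarded as a kP-module via conjugation. -/
/-!
Conjugating `g ∈ G ∖ P` by `x ∈ P` multiplies the `P`-component of `g` by `x · e(x)⁻¹`, where
`e ≠ 1` is the `E`-component of `g`. As `P` is abelian, `x` fixes `g` exactly when `e` fixes `x`,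
so the Frobenius condition makes the conjugation action free.

If a group `H` acts freely on a finite set `S`, choosing a point in each orbit identifies `S` with
`H × S/H`, and hence `k[S]` with the module `Coind_1^H (k^{S/H})` coinduced from the trivial
subgroup. By Shapiro's lemma its cohomology is that of the trivial group, which vanishes in
positive degrees.
-/

open SemidirectProduct

/-- The complement `G ∖ P` of (the canonical copy of) `P` inside `G = P ⋊[φ] E`. -/
def SdComplement {P E : Type*} [Group P] [Group E] (φ : E →* MulAut P) : Type _ :=
  {g : P ⋊[φ] E // g.right ≠ 1}

/-- `P` acts on `G ∖ P` by conjugation. -/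
instance SdComplement.instSMul {P E : Type*} [Group P] [Group E] (φ : E →* MulAut P) :
    SMul P (SdComplement φ) :=
  ⟨fun p g => ⟨inl p * g.1 * (inl p)⁻¹, by
    simpa [SemidirectProduct.mul_right, SemidirectProduct.inv_right,
      SemidirectProduct.right_inl] using g.2⟩⟩

@[simp] lemma SdComplement.smul_coe {P E : Type*} [Group P] [Group E] {φ : E →* MulAut P}
    (p : P) (g : SdComplement φ) :
    (p • g).1 = inl p * g.1 * (inl p)⁻¹ := rfl

/-- The conjugation action of `P` on `G ∖ P` is a group action. -/
instance SdComplement.mulAction {P E : Type*} [Group P] [Group E] (φ : E →* MulAut P) :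
    MulAction P (SdComplement φ) where
  one_smul g := Subtype.ext (by simp)
  mul_smul p q g := Subtype.ext (by simp [map_mul, mul_inv_rev, mul_assoc])

namespace SemidirectProduct

variable {N G : Type*} [Group G]

instance [Group N] [Finite N] [Finite G] {φ : G →* MulAut N} : Finite (N ⋊[φ] G) :=
  .of_equiv _ equivProd.symm

theorem inl_mul_mul_inv_inl_eq_self_iff [CommGroup N] {φ : G →* MulAut N} (x : N)
    (g : N ⋊[φ] G) : inl x * g * (inl x)⁻¹ = g ↔ φ g.right x = x := by
  simp only [SemidirectProduct.ext_iff, mul_left, left_inl, right_inl, map_one, MulAut.one_apply,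
    mul_right, one_mul, inv_left, inv_one, map_inv, inv_right, mul_one, and_true]
  rw [mul_inv_eq_iff_eq_mul, mul_comm x, mul_left_cancel_iff, eq_comm]

end SemidirectProduct

namespace SdComplement

variable {P E : Type*} [Group E]

instance [Group P] [Finite P] [Finite E] (φ : E →* MulAut P) : Finite (SdComplement φ) :=
  inferInstanceAs (Finite {g : P ⋊[φ] E // g.right ≠ 1})

theorem eq_one_of_smul_eq [CommGroup P] {φ : E →* MulAut P}
    (hfrob : ∀ e : E, e ≠ 1 → ∀ x : P, φ e x = x → x = 1) {x : P} {g : SdComplement φ}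
    (h : x • g = g) : x = 1 :=
  hfrob g.1.right g.2 x ((inl_mul_mul_inv_inl_eq_self_iff x g.1).1 (congrArg Subtype.val h))

end SdComplement

namespace MulAction

variable {G S : Type*} [Group G] [MulAction G S]

noncomputable def prodOrbitsEquivOfFree (hfree : ∀ (g : G) (s : S), g • s = s → g = 1) :
    G × orbitRel.Quotient G S ≃ S :=
  Equiv.ofBijective (fun x => x.1 • x.2.out) <| by
    constructor
    · rintro ⟨g, ω⟩ ⟨g', ω'⟩ (h : g • ω.out = g' • ω'.out)
      have hω : ω = ω' := by
        rw [← ω.out_eq, ← ω'.out_eq]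
        exact Quotient.sound ⟨g⁻¹ * g', by dsimp only; rw [mul_smul, ← h, inv_smul_smul]⟩
      subst hω
      have hfix : (g'⁻¹ * g) • ω.out = ω.out := by rw [mul_smul, h, inv_smul_smul]
      simp [inv_mul_eq_one.1 (hfree _ _ hfix)]
    · intro s
      obtain ⟨g, hg⟩ : ⟦s⟧.out ∈ orbit G s := Quotient.mk_out (s := orbitRel G S) s
      exact ⟨(g⁻¹, ⟦s⟧), by simp [← hg]⟩

end MulAction

namespace Representation

open MulAction

variable (k : Type*) {G : Type*} [CommRing k] [Group G]

theorem coindV_bot_trivial_eq_top (V : Type*) [AddCommGroup V] [Module k V] :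
    coindV (⊥ : Subgroup G).subtype (trivial k (⊥ : Subgroup G) V) = ⊤ := by
  ext f
  simp only [mem_coindV, Submodule.mem_top, iff_true]
  rintro ⟨g, hg⟩ h
  simp [Subgroup.mem_bot.1 hg]

/-- `x ↦ (h ↦ (ω ↦ x.coeff (h⁻¹ • ω.out)))`; the inversion turns the action of `G` on `S` into the
right translation `f ↦ f (· * g)` of the coinduced module. -/
noncomputable def ofMulActionEquivCoindOfFree {S : Type*} [MulAction G S] [Finite S]
    (hfree : ∀ (g : G) (s : S), g • s = s → g = 1) :
    (ofMulAction k G S).Equiv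
      (coind (⊥ : Subgroup G).subtype (trivial k (⊥ : Subgroup G) (orbitRel.Quotient G S → k))) :=
  .mk ((MonoidAlgebra.coeffLinearEquiv k ≪≫ₗ Finsupp.linearEquivFunOnFinite k k S ≪≫ₗ
      LinearEquiv.funCongrLeft k k (((Equiv.inv G).prodCongr (_root_.Equiv.refl _)).trans
        (prodOrbitsEquivOfFree hfree)) ≪≫ₗ LinearEquiv.curry k k G _) ≪≫ₗ
      (LinearEquiv.ofTop _ (coindV_bot_trivial_eq_top k _)).symm) fun g => by
    refine LinearMap.ext fun x => Subtype.ext (funext fun h => funext fun ω => ?_)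
    change (ofMulAction k G S g x).coeff (h⁻¹ • ω.out) = x.coeff ((h * g)⁻¹ • ω.out)
    rw [coeff_ofMulAction, mul_inv_rev, mul_smul]

end Representation

namespace groupCohomology

universe u

theorem subsingleton_ofMulAction_of_free {k G S : Type u} [CommRing k] [Group G]
    [MulAction G S] [Finite S] (hfree : ∀ (g : G) (s : S), g • s = s → g = 1) (n : ℕ) :
    Subsingleton (groupCohomology (Rep.of (Representation.ofMulAction k G S)) (n + 1)) :=
  ModuleCat.subsingleton_of_isZero <|
    (isZero_groupCohomology_succ_of_subsingleton _ n).of_iso <|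
      (functor k G (n + 1)).mapIso
        (Rep.mkIso (Representation.ofMulActionEquivCoindOfFree k hfree)) ≪≫
          coindIso (Rep.trivial k (⊥ : Subgroup G) (MulAction.orbitRel.Quotient G S → k)) (n + 1)

end groupCohomology

theorem free_conj_action_and_cohomology_vanishing_general
    (k : Type) [Field k]
    (P : Type) [CommGroup P] [Finite P]
    (E : Subgroup (MulAut P))
    (hfrob : ∀ e : E, e ≠ 1 → ∀ x : P, (e : MulAut P) x = x → x = 1) :
    (∀ x : P, x ≠ 1 → ∀ g : SdComplement E.subtype, x • g ≠ g) ∧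
    ∀ n : ℕ, 1 ≤ n →
      Subsingleton
        (groupCohomology
          (Rep.of (Representation.ofMulAction k P (SdComplement E.subtype))) n) := by
  have hfree : ∀ (x : P) (g : SdComplement E.subtype), x • g = g → x = 1 :=
    fun _ _ => SdComplement.eq_one_of_smul_eq hfrob
  refine ⟨fun x hx g h => hx (hfree x g h), fun n hn => ?_⟩
  obtain ⟨m, rfl⟩ := Nat.exists_eq_add_of_le' hn
  exact groupCohomology.subsingleton_ofMulAction_of_free hfree m

/-- Let `P` be a finite elementary abelian `p`-group, `E ≤ Aut(P)` with
Frobenius action on `P`, and `G = P ⋊ E`.  Then the conjugation action of `P` on `G ∖ P` is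
free, and consequently the group cohomology `Hⁿ(P; k[G ∖ P])` vanishes for all `n ≥ 1`,
where `k[G ∖ P]` is the `k`-linear span of `G ∖ P` in `kG`, a `kP`-module via conjugation. -/
theorem free_conj_action_and_cohomology_vanishing
    (p : ℕ) (hp : p.Prime)
    (k : Type) [Field k] [CharP k p] [IsAlgClosed k]
    (P : Type) [CommGroup P] [Finite P] (hP : ∀ g : P, g ^ p = 1)
    (E : Subgroup (MulAut P))
    (hfrob : ∀ e : E, e ≠ 1 → ∀ x : P, (e : MulAut P) x = x → x = 1) :
    (∀ x : P, x ≠ 1 → ∀ g : SdComplement E.subtype, x • g ≠ g) ∧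
    ∀ n : ℕ, 1 ≤ n →
      Subsingleton
        (groupCohomology
          (Rep.of (Representation.ofMulAction k P (SdComplement E.subtype))) n) :=
  free_conj_action_and_cohomology_vanishing_general k P E hfrob
end

section
/- Let P be a finite abelian p-group and E a finite abelian group acting on P by automorphisms, such that every nonidentity element of E fixes no nonidentity element of P. Then the number of conjugacy classes of the semidirect product H = P⋊E equals (|P|−1)/|E| + |E|. -/
namespace CardConjAux

open SemidirectProduct

variable {P E : Type*} [CommGroup P] [Finite P] [CommGroup E] [Finite E]
  (φ : E →* MulAut P)

lemma conj_right (c a : P ⋊[φ] E) : (c * a * c⁻¹).right = a.right := by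
  simp only [mul_right, inv_right]
  rw [mul_comm c.right a.right]
  group

lemma conj_left (c a : P ⋊[φ] E) :
    (c * a * c⁻¹).left = c.left * φ c.right a.left * (φ a.right c.left)⁻¹ := by
  simp only [mul_left, inv_left, mul_right]
  have h1 : ∀ (e f : E) (x : P), φ e (φ f x) = φ (e * f) x := by
    intro e f x; rw [map_mul]; rfl
  rw [h1, map_inv]
  have h2 : c.right * a.right * c.right⁻¹ = a.right := by
    rw [mul_comm c.right a.right]; group
  rw [h2]

lemma exists_shift (hfree : ∀ e : E, e ≠ 1 → ∀ x : P, x ≠ 1 → φ e x ≠ x)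
    {e : E} (he : e ≠ 1) (t : P) : ∃ y : P, y * (φ e y)⁻¹ = t := by
  let ψ : P →* P :=
    { toFun := fun y => y * (φ e y)⁻¹
      map_one' := by simp
      map_mul' := by
        intro a b
        simp only [map_mul, mul_inv]
        rw [mul_mul_mul_comm] }
  have hinj : Function.Injective ψ := by
    rw [← MonoidHom.ker_eq_bot_iff, eq_bot_iff]
    intro y hy
    simp only [MonoidHom.mem_ker] at hy
    have : φ e y = y := (mul_inv_eq_one.mp hy).symm
    by_contra hne
    simp only [Subgroup.mem_bot] at hne
    exact hfree e he y hne this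
  exact Finite.surjective_of_injective hinj t

end CardConjAux

namespace CardConjAux

open SemidirectProduct

variable {P E : Type*} [CommGroup P] [Finite P] [CommGroup E] [Finite E]
  (φ : E →* MulAut P)

lemma phi_phi (e f : E) (x : P) : φ e (φ f x) = φ (e * f) x := by
  rw [map_mul]; rfl

def orbSetoid : Setoid {x : P // x ≠ 1} where
  r a b := ∃ e : E, φ e a.1 = b.1
  iseqv := by
    refine ⟨fun a => ⟨1, by simp⟩, ?_, ?_⟩
    · rintro a b ⟨e, he⟩
      exact ⟨e⁻¹, by rw [← he, phi_phi]; simp⟩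
    · rintro a b c ⟨e, he⟩ ⟨f, hf⟩
      exact ⟨f * e, by rw [← phi_phi, he, hf]⟩

abbrev Qt : Type _ := Quotient (orbSetoid φ)

abbrev Tt : Type _ := (Option (Qt φ)) ⊕ {e : E // e ≠ 1}

open scoped Classical in
noncomputable def invFun : (P ⋊[φ] E) → Tt φ := fun a =>
  if he : a.right = 1 then
    Sum.inl (if hx : a.left = 1 then none
      else some (Quotient.mk (orbSetoid φ) ⟨a.left, hx⟩))
  else Sum.inr ⟨a.right, he⟩

lemma inv_conj (c a : P ⋊[φ] E) : invFun φ (c * a * c⁻¹) = invFun φ a := by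
  unfold invFun
  rw [conj_right, conj_left]
  by_cases he : a.right = 1
  · rw [dif_pos he, dif_pos he]
    by_cases hx : a.left = 1
    · have h1 : c.left * φ c.right a.left * (φ a.right c.left)⁻¹ = 1 := by
        rw [hx, he]; simp
      rw [dif_pos hx, dif_pos h1]
    · have h1 : c.left * φ c.right a.left * (φ a.right c.left)⁻¹ = φ c.right a.left := by
        rw [he]
        simp only [map_one, MulAut.one_apply]
        rw [mul_comm c.left (φ c.right a.left), mul_inv_cancel_right]
      have h2 : φ c.right a.left ≠ 1 := by
        simp only [ne_eq, EmbeddingLike.map_eq_one_iff]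
        exact hx
      rw [dif_neg hx, dif_neg (fun hc => h2 (h1.symm.trans hc))]
      congr 1
      congr 1
      apply Quotient.sound
      refine ⟨c.right⁻¹, ?_⟩
      show φ c.right⁻¹ (c.left * φ c.right a.left * (φ a.right c.left)⁻¹) = a.left
      rw [h1, phi_phi]; simp
  · rw [dif_neg he, dif_neg he]

lemma conj_of_inv_eq (hfree : ∀ e : E, e ≠ 1 → ∀ x : P, x ≠ 1 → φ e x ≠ x)
    (a b : P ⋊[φ] E) (h : invFun φ a = invFun φ b) : IsConj a b := by
  unfold invFun at h
  by_cases hea : a.right = 1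
  · by_cases heb : b.right = 1
    · rw [dif_pos hea, dif_pos heb] at h
      by_cases hxa : a.left = 1
      · by_cases hxb : b.left = 1
        · have : a = b := SemidirectProduct.ext (by rw [hxa, hxb]) (by rw [hea, heb])
          rw [this]
        · rw [dif_pos hxa, dif_neg hxb] at h
          simp at h
      · by_cases hxb : b.left = 1
        · rw [dif_neg hxa, dif_pos hxb] at h
          simp at h
        · rw [dif_neg hxa, dif_neg hxb] at h
          simp only [Sum.inl.injEq, Option.some.injEq] at h
          obtain ⟨e, he⟩ := Quotient.exact h
          rw [isConj_iff]
          refine ⟨⟨1, e⟩, ?_⟩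
          refine SemidirectProduct.ext ?_ ?_
          · rw [conj_left]
            show (1 : P) * φ e a.left * (φ a.right 1)⁻¹ = b.left
            rw [map_one, one_mul, inv_one, mul_one]
            exact he
          · rw [conj_right, hea, heb]
    · rw [dif_pos hea, dif_neg heb] at h
      simp at h
  · by_cases heb : b.right = 1
    · rw [dif_neg hea, dif_pos heb] at h
      simp at h
    · rw [dif_neg hea, dif_neg heb] at h
      simp only [Sum.inr.injEq, Subtype.mk.injEq] at h
      obtain ⟨y, hy⟩ := exists_shift φ hfree hea (b.left * a.left⁻¹)
      rw [isConj_iff]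
      refine ⟨⟨y, 1⟩, SemidirectProduct.ext ?_ ?_⟩
      · rw [conj_left]
        show y * φ 1 a.left * (φ a.right y)⁻¹ = b.left
        rw [map_one, MulAut.one_apply]
        rw [mul_comm y a.left, mul_assoc, hy, mul_comm b.left a.left⁻¹, mul_inv_cancel_left]
      · rw [conj_right]; exact h

end CardConjAux

namespace CardConjAux

variable {P E : Type*} [CommGroup P] [Finite P] [CommGroup E] [Finite E]
  (φ : E →* MulAut P)

lemma inv_surjective : Function.Surjective (invFun φ) := by
  rintro ((_ | q) | ⟨e, he⟩)
  · refine ⟨1, ?_⟩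
    unfold invFun
    simp [SemidirectProduct.one_left, SemidirectProduct.one_right]
  · induction q using Quotient.ind with
    | _ a =>
      obtain ⟨x, hx⟩ := a
      refine ⟨⟨x, 1⟩, ?_⟩
      classical
      unfold invFun
      show ((if he : (1:E) = 1 then Sum.inl (if hx : x = 1 then none
        else some (Quotient.mk (orbSetoid φ) ⟨x, hx⟩)) else Sum.inr ⟨1, he⟩) : Tt φ)
        = Sum.inl (some (Quotient.mk (orbSetoid φ) ⟨x, hx⟩))
      rw [dif_pos rfl, dif_neg hx]
  · refine ⟨⟨1, e⟩, ?_⟩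
    classical
    unfold invFun
    show ((if h : e = 1 then Sum.inl (if hx : (1:P) = 1 then none
      else some (Quotient.mk (orbSetoid φ) ⟨1, hx⟩)) else Sum.inr ⟨e, h⟩) : Tt φ)
      = Sum.inr ⟨e, he⟩
    rw [dif_neg he]

lemma key_card (hfree : ∀ e : E, e ≠ 1 → ∀ x : P, x ≠ 1 → φ e x ≠ x) :
    Nat.card (ConjClasses (P ⋊[φ] E)) = Nat.card (Tt φ) := by
  apply Nat.card_congr
  refine Equiv.ofBijective
    (Quotient.lift (invFun φ) (fun a b hab => ?_)) ⟨?_, ?_⟩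
  · obtain ⟨c, hc⟩ := isConj_iff.mp hab
    rw [← hc, inv_conj]
  · intro x y
    refine Quotient.inductionOn₂ x y (fun a b h => ?_)
    exact Quotient.sound (conj_of_inv_eq φ hfree a b h)
  · intro t
    obtain ⟨a, ha⟩ := inv_surjective φ t
    exact ⟨Quotient.mk _ a, ha⟩

lemma card_ne_one (G : Type*) [Group G] [Finite G] :
    Nat.card {e : G // e ≠ 1} = Nat.card G - 1 := by
  classical
  haveI : Fintype G := Fintype.ofFinite G
  rw [Nat.card_eq_fintype_card, Nat.card_eq_fintype_card]
  have : Fintype.card {e : G // e ≠ 1} = Fintype.card G - Fintype.card {e : G // e = 1} := by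
    simpa using Fintype.card_subtype_compl (fun e : G => e = 1)
  rw [this, Fintype.card_subtype_eq (1 : G)]

lemma card_T : Nat.card (Tt φ) = (Nat.card (Qt φ) + 1) + (Nat.card E - 1) := by
  classical
  haveI : Fintype (Qt φ) := Fintype.ofFinite _
  rw [Nat.card_sum]
  congr 1
  · rw [Nat.card_eq_fintype_card, Fintype.card_option, Nat.card_eq_fintype_card]
  · exact card_ne_one E

lemma card_Q_mul (hfree : ∀ e : E, e ≠ 1 → ∀ x : P, x ≠ 1 → φ e x ≠ x) :
    Nat.card (Qt φ) * Nat.card E = Nat.card P - 1 := by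
  have key : Nat.card ((Qt φ) × E) = Nat.card {x : P // x ≠ 1} := by
    apply Nat.card_congr
    refine Equiv.ofBijective
      (fun qe => ⟨φ qe.2 (qe.1.out).1, fun h => (qe.1.out).2 (by simpa using h)⟩)
      ⟨?_, ?_⟩
    · rintro ⟨q, e⟩ ⟨r, f⟩ h
      simp only [Subtype.mk.injEq] at h
      have hrel : φ (f⁻¹ * e) (q.out).1 = (r.out).1 := by
        rw [← phi_phi, h, phi_phi]; simp
      have hqr : q = r := by
        rw [← Quotient.out_eq q, ← Quotient.out_eq r]
        exact Quotient.sound ⟨f⁻¹ * e, hrel⟩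
      subst hqr
      have hef : e = f := by
        by_contra hef
        have hne : f⁻¹ * e ≠ 1 := fun hc => hef (inv_mul_eq_one.mp hc).symm
        exact hfree (f⁻¹ * e) hne (q.out).1 (q.out).2 hrel
      rw [hef]
    · rintro ⟨x, hx⟩
      set q := Quotient.mk (orbSetoid φ) (⟨x, hx⟩ : {x : P // x ≠ 1}) with hq
      obtain ⟨e, he⟩ := Quotient.exact (Quotient.out_eq q)
      exact ⟨(q, e), Subtype.ext he⟩
  rw [← Nat.card_prod, key, card_ne_one P]

end CardConjAux

/-- Let `P` be a finite abelian `p`-group and `E` a finite abelian group acting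
on `P` by automorphisms, such that every nonidentity element of `E` fixes no nonidentity element
of `P`. Then the number of conjugacy classes of the semidirect product `H = P ⋊[φ] E` equals
`(|P| − 1)/|E| + |E|`. -/
theorem card_conjClasses_semidirectProduct
    (p : ℕ) (hp : p.Prime)
    {P E : Type*} [CommGroup P] [Finite P] [CommGroup E] [Finite E]
    (hP : IsPGroup p P)
    (φ : E →* MulAut P)
    (hfree : ∀ e : E, e ≠ 1 → ∀ x : P, x ≠ 1 → φ e x ≠ x) :
    Nat.card (ConjClasses (P ⋊[φ] E)) =
      (Nat.card P - 1) / Nat.card E + Nat.card E := by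
  have h1 := CardConjAux.key_card φ hfree
  have h2 := CardConjAux.card_T φ
  have h3 := CardConjAux.card_Q_mul φ hfree
  have hE : 0 < Nat.card E := Nat.card_pos
  have hQ : Nat.card (CardConjAux.Qt φ) = (Nat.card P - 1) / Nat.card E := by
    rw [← h3, Nat.mul_div_cancel _ hE]
  rw [h1, h2, hQ]
  omega
end

section
/- Let P be a finite group and E a finite group acting on P by automorphisms such that every nonidentity element of E fixes no nonidentity element of P, and let H = P⋊E. Then for every e ∈ E with e ≠ 1, the centralizer of (1,e) in H equals {(1,f) : f ∈ C_E(e)}, the canonical copy of the centralizer of e in E. -/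
/-- Let `P` and `E` be finite groups, with `E` acting on `P` by automorphisms
(via `φ : E →* MulAut P`) such that every nonidentity element of `E` fixes no nonidentity
element of `P`, and let `H = P ⋊[φ] E`. Then for every `e ∈ E` with `e ≠ 1`, the centralizer
of `(1, e)` in `H` equals the canonical copy `{(1, f) : f ∈ C_E(e)}` of the centralizer of `e`
in `E`. -/
theorem centralizer_inr_eq_map_centralizer
    {P E : Type*} [Group P] [Group E] [Finite P] [Finite E]
    (φ : E →* MulAut P)
    (hfree : ∀ e : E, e ≠ 1 → ∀ x : P, x ≠ 1 → φ e x ≠ x)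
    (e : E) (he : e ≠ 1) :
    Subgroup.centralizer ({SemidirectProduct.inr e} : Set (P ⋊[φ] E)) =
      (Subgroup.centralizer ({e} : Set E)).map
        (SemidirectProduct.inr : E →* P ⋊[φ] E) := by
  ext ⟨a, f⟩
  simp only [Subgroup.mem_centralizer_singleton_iff, Subgroup.mem_map,
    SemidirectProduct.ext_iff, SemidirectProduct.mul_left, SemidirectProduct.mul_right,
    SemidirectProduct.left_inr, SemidirectProduct.right_inr]
  constructor
  · rintro ⟨h1, h2⟩
    refine ⟨f, ?_, ?_, rfl⟩
    · exact h2
    · by_contra ha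
      exact hfree e he a (Ne.symm ha) (by simpa using h1.symm)
  · rintro ⟨g, hg, h1, h2⟩
    subst h2
    simp [← h1, hg]
end

section
/- Let G be a finite group and k a field of prime characteristic p. Then the k-vector space Hom(G,k) is nonzero if and only if G has a quotient isomorphic to a nontrivial p-group, that is, if and only if there exists a normal subgroup N of G such that G/N is a nontrivial p-group. -/
/-!
A nonzero homomorphism `f : G → (k, +)` has image killed by `p`, so `G ⧸ ker f` is a nontrivial
`p`-group. Conversely, a nontrivial finite `p`-group has a subgroup of index `p`, which is normal
because `p` is the smallest prime dividing the group order; the quotient by it is cyclic of order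
`p`, i.e. `𝔽_p`, and `𝔽_p` embeds in `k`.
-/

theorem IsPGroup.multiplicative_of_charP (p : ℕ) (R : Type*) [NonAssocRing R] [CharP R p] :
    IsPGroup p (Multiplicative R) := fun x =>
  ⟨1, by rw [pow_one, ← ofAdd_toAdd x, ← ofAdd_nsmul, nsmul_eq_mul, CharP.cast_eq_zero,
    zero_mul, ofAdd_zero]⟩

theorem IsPGroup.exists_normal_index_eq_prime {p : ℕ} [hp : Fact p.Prime] {P : Type*} [Group P]
    [Finite P] [Nontrivial P] (hP : IsPGroup p P) :
    ∃ H : Subgroup P, H.Normal ∧ H.index = p := by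
  obtain ⟨n, hn, hcard⟩ := hP.nontrivial_iff_card.mp ‹_›
  obtain ⟨H, hH⟩ := Sylow.exists_subgroup_card_pow_prime p (hcard ▸ pow_dvd_pow p (n.sub_le 1))
  have hindex : H.index = p := by
    have h := H.card_mul_index
    rw [hH, hcard, ← pow_sub_one_mul hn.ne'] at h
    exact mul_left_cancel₀ (pow_ne_zero _ hp.out.ne_zero) h
  refine ⟨H, Subgroup.normal_of_index_eq_minFac_card ?_, hindex⟩
  rw [hindex, hcard, hp.out.pow_minFac hn.ne']

theorem IsPGroup.exists_surjective_monoidHom_zmod {p : ℕ} [Fact p.Prime] {P : Type*} [Group P]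
    [Finite P] [Nontrivial P] (hP : IsPGroup p P) :
    ∃ φ : P →* Multiplicative (ZMod p), Function.Surjective φ := by
  obtain ⟨H, hH, hindex⟩ := hP.exists_normal_index_eq_prime
  let e : P ⧸ H ≃* Multiplicative (ZMod p) :=
    mulEquivOfPrimeCardEq (H.index_eq_card ▸ hindex) (by simp)
  exact ⟨e.toMonoidHom.comp (QuotientGroup.mk' H),
    e.surjective.comp (QuotientGroup.mk'_surjective H)⟩

/-- Let `G` be a finite group and `k` a field of prime characteristic `p`.
Then the `k`-vector space `Hom(G, k)` of group homomorphisms from `G` to the additive group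
`(k, +)` is nonzero if and only if `G` has a quotient isomorphic to a nontrivial `p`-group,
i.e. iff there is a normal subgroup `N` of `G` such that `G/N` is a nontrivial `p`-group. -/
theorem hom_to_field_ne_zero_iff_exists_pGroup_quotient
    (p : ℕ) (hp : p.Prime)
    (k : Type*) [Field k] [CharP k p]
    (G : Type*) [Group G] [Finite G] :
    (∃ f : Additive G →+ k, f ≠ 0) ↔
      ∃ N : Subgroup G, ∃ hN : N.Normal,
        Nontrivial (G ⧸ N) ∧
          @IsPGroup p (G ⧸ N) (@QuotientGroup.Quotient.group G _ N hN) := by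
  have : Fact p.Prime := ⟨hp⟩
  constructor
  · rintro ⟨f, hf⟩
    let φ : G →* Multiplicative k := f.toMultiplicativeRight
    have hφ : φ ≠ 1 := fun h => hf (AddMonoidHom.toMultiplicativeRight.injective h)
    exact ⟨φ.ker, inferInstance,
      QuotientGroup.nontrivial_iff.mpr (MonoidHom.ker_eq_top_iff.not.mpr hφ),
      (IsPGroup.multiplicative_of_charP p k).of_injective _ (QuotientGroup.kerLift_injective φ)⟩
  · rintro ⟨N, hN, hnt, hpq⟩
    obtain ⟨φ, hφ⟩ := hpq.exists_surjective_monoidHom_zmod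
    obtain ⟨g, hg⟩ : ∃ g : G, φ g = Multiplicative.ofAdd 1 :=
      hφ.comp (QuotientGroup.mk'_surjective N) _
    let ι : Multiplicative (ZMod p) →* Multiplicative k :=
      (ZMod.castHom dvd_rfl k).toAddMonoidHom.toMultiplicative
    refine ⟨MonoidHom.toAdditiveLeft (ι.comp (φ.comp (QuotientGroup.mk' N))), fun h => ?_⟩
    have : (1 : k) = 0 := by simpa [ι, hg] using DFunLike.congr_fun h (Additive.ofMul g)
    exact one_ne_zero this
end

section
/- Let P = ⟨x⟩ be a cyclic group of order q = p^t and E a nontrivial p'-subgroup of Aut(P) of order e, with a generator sending x to x^s. For 0 ≤ m ≤ q−1 let D_m be the derivation of kP determined by D_m(x) = Σ_{i=0}^{e−1} s^i x^{(m−1)s^{−i}+1} (exponents modulo q), and define D_m ∼ D_n if and only if n ≡ (m−1)s^{−i}+1 (mod q) for some 0 ≤ i ≤ e−1. Then ∼ is an equivalence relation, D_1 = 0, and the derivations D_m, as m runs over a set of representatives of the equivalence classes other than the singleton class of D_1, form a k-basis of the fixed-point space Der_k(kP)^E; in particular dim_k Der_k(kP)^E = (q−1)/e. -/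
/-!
Write `D(x) = x · L(D)` with `L = logDerivGen`. A derivation of `kP` is determined by `D(x)`,
so `L` embeds `Der_k(kP)` into `kP`; since `D(xˢ) = s xˢ L(D)`, the derivation `D` is `σ`-fixed
exactly when `T (L D) = L D` for the operator `T = s · σ⁻¹ = twist σ⁻¹ s` of `kP`. As `Tᵉ = 1`
and `e` is invertible in `k`, the fixed points of `T` are the averages `∑_{i<e} Tⁱ f`; the
average of `x^(m-1)` is `L(D_m)`, and averages along one orbit of `y ↦ s⁻¹ y` are proportional,
so the `D_n` with `n ∈ R` span. Units of `ZMod (p ^ t)` that are `≡ 1 mod p` form a `p`-group,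
so the `p'`-group `E` acts freely on the nonzero exponents: every orbit other than `{0}` has `e`
elements, which gives linear independence (by coefficients) and the count `(q - 1) / e`.
Finally `D_1 = 0` because `∑_{i<e} sⁱ = 0` when `s ≠ 1 = sᵉ` in `k`.
-/

open MonoidAlgebra Finset

namespace ZMod

variable {p t : ℕ}

theorem prime_dvd_of_not_isUnit (hp : p.Prime) {a : ZMod (p ^ t)} (ha : ¬IsUnit a) :
    (p : ZMod (p ^ t)) ∣ a := by
  have : NeZero (p ^ t) := ⟨pow_ne_zero t hp.ne_zero⟩
  rw [← natCast_zmod_val a, isUnit_iff_coprime] at ha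
  rw [← natCast_zmod_val a]
  refine Nat.cast_dvd_cast (by_contra fun hpa => ha ?_)
  exact ((hp.coprime_iff_not_dvd.mpr hpa).symm).pow_right t

theorem units_eq_one_of_prime_dvd_sub_one {v : (ZMod (p ^ t))ˣ} (hv : (orderOf v).Coprime p)
    (hpv : (p : ZMod (p ^ t)) ∣ v - 1) : v = 1 := by
  have hpow : (v : ZMod (p ^ t)) ^ p ^ t = 1 := by
    have h := dvd_sub_pow_of_dvd_sub hpv t
    rwa [one_pow, pow_succ, ← Nat.cast_pow, natCast_self, zero_mul, zero_dvd_iff,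
      sub_eq_zero] at h
  have hdvd : orderOf v ∣ p ^ t := orderOf_dvd_of_pow_eq_one (Units.ext (by simpa using hpow))
  exact orderOf_eq_one_iff.mp ((hv.pow_right t).eq_one_of_dvd hdvd)

theorem units_eq_one_of_mul_eq_self (hp : p.Prime) {v : (ZMod (p ^ t))ˣ}
    (hv : (orderOf v).Coprime p) {a : ZMod (p ^ t)} (ha : a ≠ 0) (hva : v * a = a) : v = 1 := by
  refine units_eq_one_of_prime_dvd_sub_one hv (prime_dvd_of_not_isUnit hp fun hu => ha ?_)
  exact (hu.mul_right_eq_zero).mp (by rw [sub_mul, one_mul, hva, sub_self])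

theorem natCast_ne_one_of_units_ne_one (k : Type*) [AddGroupWithOne k] [CharP k p]
    {s : ℕ} {u : (ZMod (p ^ t))ˣ} (hu : (u : ZMod (p ^ t)) = s) (hv : (orderOf u).Coprime p)
    (hu1 : u ≠ 1) : (s : k) ≠ 1 := by
  intro hs
  refine hu1 (units_eq_one_of_prime_dvd_sub_one hv ?_)
  have h : (p : ℤ) ∣ (s : ℤ) - 1 :=
    ((CharP.intCast_eq_intCast k p).mp (by exact_mod_cast hs)).symm.dvd
  simpa [hu] using Int.cast_dvd_cast (α := ZMod (p ^ t)) _ _ h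

end ZMod

theorem mul_geom_sum_of_pow_eq_one {R : Type*} [Ring R] {x : R} {e : ℕ} (hx : x ^ e = 1) :
    x * ∑ i ∈ range e, x ^ i = ∑ i ∈ range e, x ^ i := by
  rw [← sub_eq_zero, ← sub_one_mul, mul_geom_sum, hx, sub_self]

theorem geom_sum_mul_pow_of_pow_eq_one {R : Type*} [Ring R] {x : R} {e : ℕ} (hx : x ^ e = 1)
    (j : ℕ) : (∑ i ∈ range e, x ^ i) * x ^ j = ∑ i ∈ range e, x ^ i := by
  induction j with
  | zero => rw [pow_zero, mul_one]
  | succ j ih =>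
    rw [pow_succ, ← mul_assoc, ih, ← sub_eq_zero, ← mul_sub_one, geom_sum_mul, hx, sub_self]

section Averaging

variable {K V M ι : Type*} [Field K] [AddCommGroup V] [Module K V] [AddCommGroup M] [Module K M]
  {T : Module.End K V} {e : ℕ}

theorem geom_sum_apply_of_apply_eq_self {v : V} (hv : T v = v) :
    (∑ i ∈ range e, T ^ i) v = (e : K) • v := by
  simp [LinearMap.sum_apply, Module.End.pow_apply, Function.iterate_fixed hv,
    Nat.cast_smul_eq_nsmul]

theorem span_range_eq_comap_ker_sub_one (hT : T ^ e = 1) (he : (e : K) ≠ 0) {L : M →ₗ[K] V}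
    (hL : Function.Injective L) {b : ι → V} (hb : Submodule.span K (Set.range b) = ⊤)
    {D : ι → M} (hD : ∀ i, L (D i) = (∑ j ∈ range e, T ^ j) (b i)) :
    Submodule.span K (Set.range D) = (LinearMap.ker (T - 1)).comap L := by
  apply le_antisymm
  · rw [Submodule.span_le]
    rintro _ ⟨i, rfl⟩
    rw [SetLike.mem_coe, Submodule.mem_comap, LinearMap.mem_ker, LinearMap.sub_apply, sub_eq_zero,
      hD, ← Module.End.mul_apply, mul_geom_sum_of_pow_eq_one hT, Module.End.one_apply]
  · intro D' hD'
    have hfix : T (L D') = L D' := by simpa [sub_eq_zero] using hD'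
    have hrange :
        LinearMap.range (∑ j ∈ range e, T ^ j) = (Submodule.span K (Set.range D)).map L := by
      rw [LinearMap.range_eq_map, ← hb, Submodule.map_span, Submodule.map_span, ← Set.range_comp,
        ← Set.range_comp]
      exact congrArg _ (congrArg Set.range (funext fun i => (hD i).symm))
    have hmem : L D' ∈ (Submodule.span K (Set.range D)).map L := by
      rw [← hrange]
      refine ⟨(e : K)⁻¹ • L D', ?_⟩
      rw [map_smul, geom_sum_apply_of_apply_eq_self hfix, inv_smul_smul₀ he]
    obtain ⟨D'', hD'', hL''⟩ := hmem
    rwa [← hL hL'']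

end Averaging

section Dilation

variable {R : Type*} [CommRing R]

/-- `n` lies in the orbit of `m` under the dilation `z ↦ w * (z - 1) + 1` centred at `1`. -/
def DilationRel (w : R) (e : ℕ) (m n : R) : Prop :=
  ∃ i < e, n = (m - 1) * w ^ i + 1

theorem equivalence_dilationRel {w : R} {e : ℕ} (hw : w ^ e = 1) (he : 0 < e) :
    Equivalence (DilationRel w e) where
  refl m := ⟨0, he, by ring⟩
  symm := by
    rintro m n ⟨i, hi, rfl⟩
    refine ⟨(e - i) % e, Nat.mod_lt _ he, ?_⟩
    rw [← pow_eq_pow_mod _ hw, add_sub_cancel_right, mul_assoc, ← pow_add,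
      Nat.add_sub_cancel' hi.le, hw, mul_one, sub_add_cancel]
  trans := by
    rintro m n r ⟨i, -, rfl⟩ ⟨j, -, rfl⟩
    refine ⟨(i + j) % e, Nat.mod_lt _ he, ?_⟩
    rw [← pow_eq_pow_mod _ hw, pow_add]
    ring

variable {w : Rˣ}

theorem dilate_ne_one {m : R} (hm : m ≠ 1) (i : ℕ) : (m - 1) * (w : R) ^ i + 1 ≠ 1 := by
  rwa [Ne, add_eq_right, ← Units.val_pow_eq_pow_val, Units.mul_left_eq_zero, sub_eq_zero]

theorem dilate_injOn
    (hfree : ∀ v ∈ Subgroup.zpowers w, ∀ y : R, y ≠ 0 → (v : R) * y = y → v = 1)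
    {m : R} (hm : m ≠ 1) :
    (Set.Iio (orderOf w)).InjOn fun i => (m - 1) * (w : R) ^ i + 1 := by
  intro i hi j hj hij
  have h : (m - 1) * ((w ^ i : Rˣ) : R) = (m - 1) * ((w ^ j : Rˣ) : R) := by simpa using hij
  refine pow_injOn_Iio_orderOf hi hj (mul_inv_eq_one.mp ?_)
  refine hfree _ (Subgroup.mul_mem _ (Subgroup.npow_mem_zpowers w i)
    (Subgroup.inv_mem _ (Subgroup.npow_mem_zpowers w j))) (m - 1) (sub_ne_zero.mpr hm) ?_
  rw [Units.val_mul, mul_comm, ← mul_assoc, h, mul_assoc, Units.mul_inv, mul_one]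

theorem card_mul_orderOf_of_isTransversal [Fintype R] [DecidableEq R]
    (hfree : ∀ v ∈ Subgroup.zpowers w, ∀ y : R, y ≠ 0 → (v : R) * y = y → v = 1)
    {S : Finset R} (hS1 : ∀ n ∈ S, n ≠ 1)
    (hS : ∀ m : R, m ≠ 1 → ∃! n, n ∈ S ∧ DilationRel (w : R) (orderOf w) m n) :
    S.card * orderOf w = Fintype.card R - 1 := by
  have hrel : Equivalence (DilationRel (w : R) (orderOf w)) :=
    equivalence_dilationRel (by rw [← orderOf_units, pow_orderOf_eq_one]) (orderOf_pos w)
  set orbit : R → Finset R := fun n =>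
    (range (orderOf w)).image fun i => (n - 1) * (w : R) ^ i + 1
  have mem_orbit : ∀ n m, m ∈ orbit n ↔ DilationRel (w : R) (orderOf w) n m := by
    simp [orbit, DilationRel, eq_comm]
  have hcover : univ.erase 1 = S.biUnion orbit := by
    ext m
    simp only [mem_erase, mem_univ, and_true, mem_biUnion, mem_orbit]
    constructor
    · intro hm
      obtain ⟨n, ⟨hnS, hmn⟩, -⟩ := hS m hm
      exact ⟨n, hnS, hrel.symm hmn⟩
    · rintro ⟨n, hnS, i, -, rfl⟩
      exact dilate_ne_one (hS1 n hnS) i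
  have hdisj : (S : Set R).PairwiseDisjoint orbit := by
    intro n₁ h₁ n₂ h₂ hne
    refine disjoint_left.mpr fun m hm₁ hm₂ => hne ?_
    rw [mem_orbit] at hm₁ hm₂
    have hm : m ≠ 1 := by
      obtain ⟨i, -, rfl⟩ := hm₁
      exact dilate_ne_one (hS1 n₁ h₁) i
    exact (hS m hm).unique ⟨h₁, hrel.symm hm₁⟩ ⟨h₂, hrel.symm hm₂⟩
  have hcard : ∀ n ∈ S, (orbit n).card = orderOf w := fun n hn => by
    rw [card_image_of_injOn, card_range]
    simpa using dilate_injOn hfree (hS1 n hn)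
  rw [← card_univ, ← card_erase_of_mem (mem_univ 1), hcover, card_biUnion hdisj,
    sum_congr rfl hcard, sum_const, smul_eq_mul]

end Dilation

namespace ZModGroupAlgebra

section CommRing

variable {k : Type*} [CommRing k] {q : ℕ}

local notation "kC" => MonoidAlgebra k (Multiplicative (ZMod q))

local notation "𝕩" a:max =>
  MonoidAlgebra.of k (Multiplicative (ZMod q)) (Multiplicative.ofAdd a)

theorem of_ofAdd_one_pow (n : ℕ) : (𝕩 (1 : ZMod q)) ^ n = 𝕩 (n : ZMod q) := by
  rw [← map_pow, ← ofAdd_nsmul, nsmul_one]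

theorem of_ofAdd_mul_of_ofAdd (a b : ZMod q) : (𝕩 a) * 𝕩 b = 𝕩 (a + b) := by
  rw [← map_mul, ← ofAdd_add]

theorem derivation_ext [NeZero q] {D₁ D₂ : Derivation k kC kC} (h : D₁ (𝕩 1) = D₂ (𝕩 1)) :
    D₁ = D₂ := by
  refine Derivation.ext fun f => ?_
  induction f using MonoidAlgebra.induction_on with
  | of g =>
    rw [← ofAdd_toAdd g, ← ZMod.natCast_zmod_val (Multiplicative.toAdd g), ← of_ofAdd_one_pow,
      Derivation.leibniz_pow, Derivation.leibniz_pow, h]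
  | add f₁ f₂ h₁ h₂ => rw [map_add, map_add, h₁, h₂]
  | smul c f hf => rw [Derivation.map_smul, Derivation.map_smul, hf]

noncomputable def logDerivGen : Derivation k kC kC →ₗ[k] kC where
  toFun D := (𝕩 (-1 : ZMod q)) * D (𝕩 1)
  map_add' _ _ := mul_add _ _ _
  map_smul' c D := mul_smul_comm c (𝕩 (-1 : ZMod q)) (D (𝕩 1))

theorem logDerivGen_apply (D : Derivation k kC kC) :
    logDerivGen D = (𝕩 (-1 : ZMod q)) * D (𝕩 1) := rfl

theorem of_ofAdd_one_mul_logDerivGen (D : Derivation k kC kC) :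
    (𝕩 (1 : ZMod q)) * logDerivGen D = D (𝕩 1) := by
  rw [logDerivGen_apply, ← mul_assoc, of_ofAdd_mul_of_ofAdd, add_neg_cancel, ofAdd_zero, map_one,
    one_mul]

theorem logDerivGen_injective [NeZero q] :
    Function.Injective (logDerivGen : Derivation k kC kC →ₗ[k] kC) := fun D₁ D₂ h =>
  derivation_ext (by rw [← of_ofAdd_one_mul_logDerivGen, h, of_ofAdd_one_mul_logDerivGen])

theorem derivation_of_ofAdd_one_pow (D : Derivation k kC kC) (n : ℕ) :
    D ((𝕩 (1 : ZMod q)) ^ n) = (n : k) • ((𝕩 (1 : ZMod q)) ^ n * logDerivGen D) := by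
  cases n with
  | zero => simp
  | succ n =>
    rw [Derivation.leibniz_pow, ← of_ofAdd_one_mul_logDerivGen, Nat.add_sub_cancel, smul_eq_mul,
      ← mul_assoc, ← pow_succ, Nat.cast_smul_eq_nsmul]

noncomputable def conjDerivation (φ : kC ≃ₐ[k] kC) (D : Derivation k kC kC) :
    Derivation k kC kC :=
  Derivation.liftOfRightInverse (f := φ.symm) (f_inv := φ) φ.symm_apply_apply
    (d := D) (fun a ha => by simp_all)

theorem conjDerivation_apply (φ : kC ≃ₐ[k] kC) (D : Derivation k kC kC) (a : kC) :
    conjDerivation φ D a = φ.symm (D (φ a)) := rfl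

theorem forall_apply_derivation_symm_apply_iff (φ : kC ≃ₐ[k] kC) (D : Derivation k kC kC) :
    (∀ a, φ (D (φ.symm a)) = D a) ↔ conjDerivation φ D = D := by
  rw [Derivation.ext_iff, φ.surjective.forall]
  simp only [φ.symm_apply_apply, conjDerivation_apply, φ.symm_apply_eq, eq_comm]

theorem logDerivGen_conjDerivation (φ : kC ≃ₐ[k] kC) {s : ℕ}
    (hφ : φ (𝕩 1) = (𝕩 (1 : ZMod q)) ^ s) (D : Derivation k kC kC) :
    logDerivGen (conjDerivation φ D) = (s : k) • φ.symm (logDerivGen D) := by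
  rw [logDerivGen_apply, conjDerivation_apply, hφ, derivation_of_ofAdd_one_pow, map_smul, map_mul,
    ← hφ, φ.symm_apply_apply, mul_smul_comm, ← mul_assoc, of_ofAdd_mul_of_ofAdd, neg_add_cancel,
    ofAdd_zero, map_one, one_mul]

noncomputable def twist (σ : MulAut (Multiplicative (ZMod q))) (c : k) : Module.End k kC :=
  c • (domCongr k k σ).toLinearMap

theorem setOf_forall_domCongr_derivation_eq [NeZero q] {σ : MulAut (Multiplicative (ZMod q))}
    {s : ℕ}
    (hσ : ∀ a : ZMod q, σ (Multiplicative.ofAdd a) = Multiplicative.ofAdd ((s : ZMod q) * a)) :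
    {D : Derivation k kC kC | ∀ a, domCongr k k σ (D ((domCongr k k σ).symm a)) = D a} =
      (LinearMap.ker (twist σ.symm (s : k) - 1)).comap logDerivGen := by
  have hφ : domCongr k k σ (𝕩 1) = (𝕩 (1 : ZMod q)) ^ s := by
    rw [of_ofAdd_one_pow, of_apply, of_apply, domCongr_single, hσ, mul_one]
  ext D
  rw [Set.mem_ofPred_eq, forall_apply_derivation_symm_apply_iff, SetLike.mem_coe,
    Submodule.mem_comap, LinearMap.mem_ker, LinearMap.sub_apply, Module.End.one_apply, sub_eq_zero,
    ← logDerivGen_injective.eq_iff, logDerivGen_conjDerivation _ hφ]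
  rfl

variable {σ : MulAut (Multiplicative (ZMod q))}

section

variable {w : ZMod q}

theorem twist_pow_apply
    (hσ : ∀ a, σ (Multiplicative.ofAdd a) = Multiplicative.ofAdd (a * w)) (c : k) (i : ℕ)
    (a : ZMod q) : (twist σ c ^ i) (𝕩 a) = c ^ i • 𝕩 (a * w ^ i) := by
  induction i with
  | zero => simp
  | succ i ih =>
    rw [pow_succ', Module.End.mul_apply, ih, map_smul, twist, LinearMap.smul_apply,
      AlgEquiv.toLinearMap_apply, of_apply, domCongr_single, hσ, ← of_apply, smul_smul,
      pow_succ c, pow_succ w, mul_assoc]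

theorem twist_pow_eq_one
    (hσ : ∀ a, σ (Multiplicative.ofAdd a) = Multiplicative.ofAdd (a * w)) {c : k} {e : ℕ}
    (hw : w ^ e = 1) (hc : c ^ e = 1) : twist σ c ^ e = 1 :=
  (MonoidAlgebra.basis _ k).ext fun g => by
    rw [basis_apply, ← of_apply, ← ofAdd_toAdd g, twist_pow_apply hσ, hw, hc, mul_one, one_smul,
      Module.End.one_apply]

theorem coeff_geom_sum_twist_apply
    (hσ : ∀ a, σ (Multiplicative.ofAdd a) = Multiplicative.ofAdd (a * w)) (c : k) (e : ℕ)
    (y b : ZMod q) :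
    ((∑ i ∈ range e, twist σ c ^ i) (𝕩 y)).coeff (Multiplicative.ofAdd b) =
      ∑ i ∈ range e, if y * w ^ i = b then c ^ i else 0 := by
  rw [LinearMap.sum_apply, coeff_sum, Finsupp.finsetSum_apply]
  refine sum_congr rfl fun i _ => ?_
  rw [twist_pow_apply hσ]
  simp [of_apply, Finsupp.single_apply]

theorem logDerivGen_eq_geom_sum_twist_apply
    (hσ : ∀ a, σ (Multiplicative.ofAdd a) = Multiplicative.ofAdd (a * w)) {c : k} {e : ℕ}
    {y : ZMod q} {D : Derivation k kC kC}
    (hD : D (𝕩 1) = ∑ i ∈ range e, c ^ i • 𝕩 (y * w ^ i + 1)) :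
    logDerivGen D = (∑ i ∈ range e, twist σ c ^ i) (𝕩 y) := by
  rw [logDerivGen_apply, hD, mul_sum, LinearMap.sum_apply]
  refine sum_congr rfl fun i _ => ?_
  rw [mul_smul_comm, of_ofAdd_mul_of_ofAdd, add_comm (y * w ^ i), neg_add_cancel_left,
    twist_pow_apply hσ]

end

theorem linearIndependent_of_isTransversal {w : (ZMod q)ˣ} {c : k}
    (hσ : ∀ a, σ (Multiplicative.ofAdd a) = Multiplicative.ofAdd (a * (w : ZMod q)))
    (hfree : ∀ v ∈ Subgroup.zpowers w, ∀ y : ZMod q, y ≠ 0 → (v : ZMod q) * y = y → v = 1)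
    {D : ZMod q → Derivation k kC kC}
    (hD : ∀ m, logDerivGen (D m) = (∑ i ∈ range (orderOf w), twist σ c ^ i) (𝕩 (m - 1)))
    {R : Finset (ZMod q)} (hR1 : ∀ n ∈ R, n ≠ 1)
    (hR : ∀ m, m ≠ 1 → ∃! n, n ∈ R ∧ DilationRel (w : ZMod q) (orderOf w) m n) :
    LinearIndependent k (fun n : R => D n) := by
  classical
  refine LinearIndependent.of_pairwise_dual_eq_zero_one _ (fun n =>
    (MonoidAlgebra.basis _ k).coord (Multiplicative.ofAdd ((n : ZMod q) - 1)) ∘ₗ logDerivGen)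
    (fun n n' hne => ?_) (fun n => ?_)
  · change (logDerivGen (D n')).coeff _ = 0
    rw [hD, coeff_geom_sum_twist_apply hσ]
    refine sum_eq_zero fun i hi => if_neg fun h => hne (Subtype.ext ?_)
    exact (hR n' (hR1 n' n'.2)).unique ⟨n.2, i, mem_range.mp hi, by rw [h, sub_add_cancel]⟩
      ⟨n'.2, 0, orderOf_pos w, by rw [pow_zero, mul_one, sub_add_cancel]⟩
  · change (logDerivGen (D n)).coeff _ = 1
    rw [hD, coeff_geom_sum_twist_apply hσ,
      sum_eq_single_of_mem 0 (mem_range.mpr (orderOf_pos w)), if_pos (by rw [pow_zero, mul_one]),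
      pow_zero]
    intro i hi hi0
    refine if_neg fun h => hi0 ?_
    exact dilate_injOn hfree (hR1 n n.2) (mem_range.mp hi) (orderOf_pos w)
      (by simp only [h, pow_zero, mul_one])

end CommRing

section Field

variable {k : Type*} [Field k] {q : ℕ} {σ : MulAut (Multiplicative (ZMod q))}
  {w : (ZMod q)ˣ} {c : k}

local notation "kC" => MonoidAlgebra k (Multiplicative (ZMod q))

local notation "𝕩" a:max =>
  MonoidAlgebra.of k (Multiplicative (ZMod q)) (Multiplicative.ofAdd a)

theorem apply_one_eq_zero [NeZero q]
    (hσ : ∀ a, σ (Multiplicative.ofAdd a) = Multiplicative.ofAdd (a * (w : ZMod q)))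
    (hc : c ≠ 1) {e : ℕ} (hce : c ^ e = 1)
    {D : ZMod q → Derivation k kC kC}
    (hD : ∀ m, logDerivGen (D m) = (∑ i ∈ range e, twist σ c ^ i) (𝕩 (m - 1))) : D 1 = 0 := by
  apply logDerivGen_injective
  rw [hD, map_zero, sub_self, LinearMap.sum_apply]
  simp_rw [twist_pow_apply hσ, zero_mul]
  rw [← sum_smul, geom_sum_eq hc, hce, sub_self, zero_div, zero_smul]

theorem eq_pow_smul_of_eq_dilate [NeZero q]
    (hσ : ∀ a, σ (Multiplicative.ofAdd a) = Multiplicative.ofAdd (a * (w : ZMod q)))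
    {e : ℕ} (hT : twist σ c ^ e = 1)
    {D : ZMod q → Derivation k kC kC}
    (hD : ∀ m, logDerivGen (D m) = (∑ i ∈ range e, twist σ c ^ i) (𝕩 (m - 1))) {m n : ZMod q}
    {j : ℕ} (hn : n = (m - 1) * (w : ZMod q) ^ j + 1) : D m = c ^ j • D n := by
  apply logDerivGen_injective
  rw [map_smul, hD, hD, hn, add_sub_cancel_right, ← map_smul, ← twist_pow_apply hσ,
    ← Module.End.mul_apply, geom_sum_mul_pow_of_pow_eq_one hT]

theorem span_eq_comap_ker_twist_sub_one [NeZero q]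
    (hσ : ∀ a, σ (Multiplicative.ofAdd a) = Multiplicative.ofAdd (a * (w : ZMod q)))
    {e : ℕ} (hT : twist σ c ^ e = 1) (he : (e : k) ≠ 0)
    {D : ZMod q → Derivation k kC kC}
    (hD : ∀ m, logDerivGen (D m) = (∑ i ∈ range e, twist σ c ^ i) (𝕩 (m - 1))) (hD1 : D 1 = 0)
    {R : Finset (ZMod q)} (hR : ∀ m, m ≠ 1 → ∃ n ∈ R, DilationRel (w : ZMod q) e m n) :
    Submodule.span k (Set.range fun n : R => D n) =
      (LinearMap.ker (twist σ c - 1)).comap logDerivGen := by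
  have hb : Submodule.span k (Set.range fun m : ZMod q => 𝕩 (m - 1)) = ⊤ := by
    refine eq_top_iff.mpr ((MonoidAlgebra.basis _ k).span_eq ▸ Submodule.span_mono ?_)
    rintro _ ⟨g, rfl⟩
    exact ⟨Multiplicative.toAdd g + 1, by
      simp only [add_sub_cancel_right, basis_apply, of_apply, ofAdd_toAdd]⟩
  rw [← span_range_eq_comap_ker_sub_one hT he logDerivGen_injective hb hD]
  refine le_antisymm (Submodule.span_mono (Set.range_subset_iff.mpr fun n => ⟨n, rfl⟩))
    (Submodule.span_le.mpr ?_)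
  rintro _ ⟨m, rfl⟩
  rcases eq_or_ne m 1 with rfl | hm
  · rw [hD1]
    exact zero_mem _
  · obtain ⟨n, hnR, j, -, hn⟩ := hR m hm
    rw [eq_pow_smul_of_eq_dilate hσ hT hD hn]
    exact Submodule.smul_mem _ _ (Submodule.subset_span ⟨⟨n, hnR⟩, rfl⟩)

end Field

end ZModGroupAlgebra

open ZModGroupAlgebra

theorem fixed_derivations_basis_cyclic_general
    (p t q : ℕ) (hp : p.Prime) (ht : 1 ≤ t) (hq : q = p ^ t)
    (k : Type*) [Field k] [CharP k p]
    (s : ℕ) (hcop : s.Coprime q)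
    (e : ℕ) (he : orderOf (ZMod.unitOfCoprime s hcop) = e)
    (hent : 1 < e) (hep : e.Coprime p)
    (σ : MulAut (Multiplicative (ZMod q)))
    (hσ : ∀ a : ZMod q, σ (Multiplicative.ofAdd a) = Multiplicative.ofAdd ((s : ZMod q) * a))
    (D : ZMod q → Derivation k (MonoidAlgebra k (Multiplicative (ZMod q)))
      (MonoidAlgebra k (Multiplicative (ZMod q))))
    (hD : ∀ m : ZMod q,
      D m (MonoidAlgebra.of k (Multiplicative (ZMod q)) (Multiplicative.ofAdd (1 : ZMod q))) =
        ∑ i ∈ Finset.range e,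
          (s : k) ^ i •
            MonoidAlgebra.of k (Multiplicative (ZMod q))
              (Multiplicative.ofAdd
                ((m - 1) * (((ZMod.unitOfCoprime s hcop)⁻¹ : (ZMod q)ˣ) : ZMod q) ^ i + 1))) :
    Equivalence (fun m n : ZMod q =>
        ∃ i < e, n = (m - 1) * (((ZMod.unitOfCoprime s hcop)⁻¹ : (ZMod q)ˣ) : ZMod q) ^ i + 1) ∧
    D 1 = 0 ∧
    ∀ R : Finset (ZMod q),
      (∀ n ∈ R, n ≠ 1) →
      (∀ m : ZMod q, m ≠ 1 → ∃! n, n ∈ R ∧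
        ∃ i < e, n = (m - 1) * (((ZMod.unitOfCoprime s hcop)⁻¹ : (ZMod q)ˣ) : ZMod q) ^ i + 1) →
      (LinearIndependent k (fun n : R => D n) ∧
        (Submodule.span k (Set.range fun n : R => D n) : Set _) =
          {D' : Derivation k (MonoidAlgebra k (Multiplicative (ZMod q)))
              (MonoidAlgebra k (Multiplicative (ZMod q))) |
            ∀ a, MonoidAlgebra.domCongr k k σ (D' ((MonoidAlgebra.domCongr k k σ).symm a))
              = D' a} ∧
        R.card = (q - 1) / e) := by
  subst hq
  have : NeZero (p ^ t) := ⟨pow_ne_zero t hp.ne_zero⟩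
  have hu := ZMod.coe_unitOfCoprime s hcop
  generalize ZMod.unitOfCoprime s hcop = u at hu he hD ⊢
  obtain rfl : orderOf u⁻¹ = e := by rw [orderOf_inv, he]
  have hw : ((u⁻¹ : (ZMod (p ^ t))ˣ) : ZMod (p ^ t)) ^ orderOf u⁻¹ = 1 := by
    rw [← orderOf_units, pow_orderOf_eq_one]
  have hσ' : ∀ a, σ.symm (.ofAdd a) = .ofAdd (a * (u⁻¹ : (ZMod (p ^ t))ˣ)) := fun a =>
    σ.symm_apply_eq.mpr (by rw [hσ, ← hu, mul_left_comm, Units.mul_inv, mul_one])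
  have hfree : ∀ v ∈ Subgroup.zpowers u⁻¹, ∀ y : ZMod (p ^ t), y ≠ 0 → (v : ZMod _) * y = y →
      v = 1 := fun v hv _ =>
    ZMod.units_eq_one_of_mul_eq_self hp (hep.coprime_dvd_left (orderOf_dvd_of_mem_zpowers hv))
  have hse : (s : k) ^ orderOf u⁻¹ = 1 := by
    rw [← map_natCast (ZMod.castHom (dvd_pow_self p (by omega : t ≠ 0)) k), ← hu, ← map_pow,
      orderOf_inv, ← orderOf_units, pow_orderOf_eq_one, map_one]
  have hs1 : (s : k) ≠ 1 :=
    ZMod.natCast_ne_one_of_units_ne_one k hu (he ▸ hep) (by rintro rfl; simp at hent)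
  have he0 : (orderOf u⁻¹ : k) ≠ 0 :=
    (CharP.cast_eq_zero_iff k p _).not.mpr ((Nat.Prime.coprime_iff_not_dvd hp).mp hep.symm)
  have hT := twist_pow_eq_one hσ' hw hse
  have hL := fun m => logDerivGen_eq_geom_sum_twist_apply hσ' (hD m)
  have hD1 : D 1 = 0 := apply_one_eq_zero hσ' hs1 hse hL
  refine ⟨equivalence_dilationRel hw (orderOf_pos _), hD1, fun R hR1 hR =>
    ⟨linearIndependent_of_isTransversal hσ' hfree hL hR1 hR, ?_, ?_⟩⟩
  · rw [span_eq_comap_ker_twist_sub_one hσ' hT he0 hL hD1 fun m hm => (hR m hm).exists,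
      setOf_forall_domCongr_derivation_eq hσ]
  · have hcard := card_mul_orderOf_of_isTransversal hfree hR1 hR
    rw [ZMod.card] at hcard
    rw [← hcard, Nat.mul_div_cancel _ (orderOf_pos _)]

/-- Let `P = ⟨x⟩` be cyclic of order `q = p ^ t` and `E` a nontrivial
`p'`-subgroup of `Aut(P)` of order `e`, with a generator `σ` sending `x` to `x ^ s`.  For
`0 ≤ m ≤ q − 1` let `D_m` be the derivation of `kP` with
`D_m(x) = Σ_{i=0}^{e−1} sⁱ x^{(m−1)s^{−i}+1}` (exponents mod `q`), and declare `D_m ∼ D_n`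
iff `n ≡ (m−1)s^{−i}+1 (mod q)` for some `0 ≤ i ≤ e−1`.  Then `∼` is an equivalence
relation, `D_1 = 0`, and the `D_m`, as `m` runs over representatives of the equivalence
classes other than the singleton class of `D_1`, form a `k`-basis of the fixed-point space
`Der_k(kP)^E`; in particular `dim_k Der_k(kP)^E = (q − 1)/e`.
(`P` is realised as `Multiplicative (ZMod q)`, `E`-fixedness is fixedness under the
generator `σ`, acting on derivations by `D ↦ σ ∘ D ∘ σ⁻¹`.) -/
theorem fixed_derivations_basis_cyclic
    (p t q : ℕ) (hp : p.Prime) (ht : 1 ≤ t) (hq : q = p ^ t)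
    (k : Type*) [Field k] [CharP k p] [IsAlgClosed k]
    (s : ℕ) (hcop : s.Coprime q)
    (e : ℕ) (he : orderOf (ZMod.unitOfCoprime s hcop) = e)
    (hent : 1 < e) (hep : e.Coprime p)
    (σ : MulAut (Multiplicative (ZMod q)))
    (hσ : ∀ a : ZMod q, σ (Multiplicative.ofAdd a) = Multiplicative.ofAdd ((s : ZMod q) * a))
    (D : ZMod q → Derivation k (MonoidAlgebra k (Multiplicative (ZMod q)))
      (MonoidAlgebra k (Multiplicative (ZMod q))))
    (hD : ∀ m : ZMod q,
      D m (MonoidAlgebra.of k (Multiplicative (ZMod q)) (Multiplicative.ofAdd (1 : ZMod q))) =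
        ∑ i ∈ Finset.range e,
          (s : k) ^ i •
            MonoidAlgebra.of k (Multiplicative (ZMod q))
              (Multiplicative.ofAdd
                ((m - 1) * (((ZMod.unitOfCoprime s hcop)⁻¹ : (ZMod q)ˣ) : ZMod q) ^ i + 1))) :
    Equivalence (fun m n : ZMod q =>
        ∃ i < e, n = (m - 1) * (((ZMod.unitOfCoprime s hcop)⁻¹ : (ZMod q)ˣ) : ZMod q) ^ i + 1) ∧
    D 1 = 0 ∧
    ∀ R : Finset (ZMod q),
      (∀ n ∈ R, n ≠ 1) →
      (∀ m : ZMod q, m ≠ 1 → ∃! n, n ∈ R ∧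
        ∃ i < e, n = (m - 1) * (((ZMod.unitOfCoprime s hcop)⁻¹ : (ZMod q)ˣ) : ZMod q) ^ i + 1) →
      (LinearIndependent k (fun n : R => D n) ∧
        (Submodule.span k (Set.range fun n : R => D n) : Set _) =
          {D' : Derivation k (MonoidAlgebra k (Multiplicative (ZMod q)))
              (MonoidAlgebra k (Multiplicative (ZMod q))) |
            ∀ a, MonoidAlgebra.domCongr k k σ (D' ((MonoidAlgebra.domCongr k k σ).symm a))
              = D' a} ∧
        R.card = (q - 1) / e) :=
  fixed_derivations_basis_cyclic_general p t q hp ht hq k s hcop e he hent hep σ hσ D hD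
end

section
/- Let p be an odd prime, P = ⟨x⟩ cyclic of order p, and E = Aut(P), which is cyclic of order p−1. Then the fixed-point space Der_k(kP)^E is one-dimensional over k, and it is spanned by a derivation D whose p-fold composite D∘D∘⋯∘D (p factors) equals D; that is, HH^1(kP)^E ≅ Der_k(kP)^E has a p-toral basis. -/
/-!
Every derivation of `kP` is `f • E` for the Euler derivation `E : x^a ↦ a x^a`, since both are
determined by their value at `x`. The automorphism `x ↦ x^s` conjugates `E` into `s⁻¹ E`, so
`f • E` is invariant iff `σ_s f = s f` for every `s`; comparing coefficients (and using `p ≠ 2` for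
the coefficient of `1`) forces `f` to be a multiple of `∑ b⁻¹ x^b`. In characteristic `p` the
`p`-th power of an invariant derivation is again an invariant derivation, so `D^p = c D`, and
`c = 1` because `D` fixes the norm element `∑ x^a`: this is the identity `∑ b⁻¹ (t - b) = 1`
in `ZMod p`.
-/

open MonoidAlgebra Finset Multiplicative

namespace Derivation

variable {R A : Type*} [CommRing R] [CommRing A] [Algebra R A]

theorem iterate_map_mul (D : Derivation R A A) (n : ℕ) (a b : A) :
    D^[n] (a * b) = ∑ ij ∈ antidiagonal n, n.choose ij.1 • (D^[ij.1] a * D^[ij.2] b) := by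
  induction n with
  | zero => simp
  | succ n ih =>
    rw [sum_antidiagonal_choose_succ_nsmul (fun i j ↦ D^[i] a * D^[j] b) n]
    simp only [Function.iterate_succ_apply', ih, map_sum, map_nsmul, leibniz, smul_eq_mul,
      nsmul_add, sum_add_distrib]
    congr 1
    · refine sum_congr rfl fun ij hij ↦ ?_
      rw [Nat.choose_symm_of_eq_add (HasAntidiagonal.mem_antidiagonal.1 hij).symm]
      ring

theorem iterate_prime_map_mul (p : ℕ) [hp : Fact p.Prime] [CharP A p] (D : Derivation R A A)
    (a b : A) : D^[p] (a * b) = a * D^[p] b + D^[p] a * b := by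
  rw [iterate_map_mul, sum_eq_add_of_mem (0, p) (p, 0) (by simp) (by simp)
    (by simp [hp.out.ne_zero])]
  · simp
  · rintro ⟨i, j⟩ hij ⟨hi, hj⟩
    have hi0 : i ≠ 0 := by rintro rfl; simp_all
    have hip : i < p := by
      rw [HasAntidiagonal.mem_antidiagonal] at hij
      refine lt_of_le_of_ne (by omega) ?_
      rintro rfl
      exact hj (by simp; omega)
    rw [nsmul_eq_mul, (CharP.cast_eq_zero_iff A p _).2 (hp.out.dvd_choose_self hi0 hip), zero_mul]

noncomputable def iteratePrime (p : ℕ) [Fact p.Prime] [CharP A p] (D : Derivation R A A) :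
    Derivation R A A :=
  .mk' (D.toLinearMap ^ p) fun a b ↦ by
    simp only [Module.End.pow_apply, coeFn_coe, iterate_prime_map_mul, smul_eq_mul]
    ring

theorem toLinearMap_iteratePrime (p : ℕ) [Fact p.Prime] [CharP A p] (D : Derivation R A A) :
    (D.iteratePrime p).toLinearMap = D.toLinearMap ^ p := rfl

theorem coe_iteratePrime (p : ℕ) [Fact p.Prime] [CharP A p] (D : Derivation R A A) :
    ⇑(D.iteratePrime p) = D^[p] := Module.End.coe_pow _ p

end Derivation

namespace ZMod

theorem sum_inv_mul_sub_eq_one {p : ℕ} [Fact p.Prime] (hp2 : p ≠ 2) (t : ZMod p) :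
    ∑ b, b⁻¹ * (t - b) = 1 := by
  have hsum : ∑ b : ZMod p, b⁻¹ = 0 := by
    rw [show ∑ b : ZMod p, b⁻¹ = ∑ b : ZMod p, b from Equiv.sum_comp (Equiv.inv (ZMod p)) id]
    have h2 := (Fact.out : p.Prime).two_le
    simpa using FiniteField.sum_pow_lt_card_sub_one (ZMod p) 1 (by rw [ZMod.card]; omega)
  have hcount : ∑ b : ZMod p, b⁻¹ * b = -1 := by
    rw [← add_sum_erase _ _ (mem_univ 0), inv_zero, zero_mul, zero_add,
      sum_congr rfl fun b hb ↦ inv_mul_cancel₀ (ne_of_mem_erase hb), sum_const,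
      card_erase_of_mem (mem_univ _), card_univ, ZMod.card, nsmul_one,
      Nat.cast_pred (Fact.out : p.Prime).pos, ZMod.natCast_self, zero_sub]
  simp only [mul_sub, sum_sub_distrib, ← sum_mul, hsum, hcount]
  ring

def autScalar {n : ℕ} (σ : MulAut (Multiplicative (ZMod n))) : ZMod n := toAdd (σ (ofAdd 1))

theorem mulAut_apply_ofAdd {n : ℕ} [NeZero n] (σ : MulAut (Multiplicative (ZMod n)))
    (z : ZMod n) : σ (ofAdd z) = ofAdd (z * autScalar σ) := by
  conv_lhs => rw [← ZMod.natCast_zmod_val z, ← nsmul_one, ofAdd_nsmul, map_pow]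
  rw [autScalar, ← ofAdd_toAdd (σ (ofAdd 1)), ← ofAdd_nsmul, nsmul_eq_mul, ZMod.natCast_zmod_val,
    toAdd_ofAdd]

theorem autScalar_ne_zero {p : ℕ} [Fact p.Prime] (σ : MulAut (Multiplicative (ZMod p))) :
    autScalar σ ≠ 0 := by
  rw [autScalar, Ne, toAdd_eq_zero, MulEquiv.map_eq_one_iff, ofAdd_eq_one]
  exact one_ne_zero

theorem exists_autScalar_eq {p : ℕ} [Fact p.Prime] {c : ZMod p} (hc : c ≠ 0) :
    ∃ σ : MulAut (Multiplicative (ZMod p)), autScalar σ = c :=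
  ⟨(MulAutMultiplicative (ZMod p)).symm (AddAut.mulLeft (Units.mk0 c hc)), mul_one c⟩

end ZMod

namespace MonoidAlgebra

section Euler

variable {k : Type*} [CommRing k] {A : Type*} [AddCommMonoid A]

noncomputable def eulerMap (φ : A →+ k) : k[Multiplicative A] →ₗ[k] k[Multiplicative A] :=
  (MonoidAlgebra.basis (Multiplicative A) k).constr k fun g ↦ φ (toAdd g) • single g 1

theorem eulerMap_single (φ : A →+ k) (g : Multiplicative A) (r : k) :
    eulerMap φ (single g r) = φ (toAdd g) • single g r := by
  rw [← mul_one r, ← smul_eq_mul, ← smul_single, ← basis_apply, eulerMap, map_smul,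
    Module.Basis.constr_basis, basis_apply, smul_comm]

noncomputable def eulerDerivation (φ : A →+ k) :
    Derivation k k[Multiplicative A] k[Multiplicative A] :=
  .mk' (eulerMap φ) fun a b ↦ by
    induction a using MonoidAlgebra.induction_linear with
    | zero => simp
    | add f g hf hg => simp only [add_mul, map_add, hf, hg, add_smul, smul_add]; abel
    | single g r =>
      induction b using MonoidAlgebra.induction_linear with
      | zero => simp
      | add f g hf hg => simp only [mul_add, map_add, hf, hg, add_smul, smul_add]; abel
      | single h s =>
        simp only [single_mul_single, eulerMap_single, smul_eq_mul, mul_smul_comm, toAdd_mul,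
          map_add, add_smul, mul_comm h g, mul_comm s r]
        abel

theorem eulerDerivation_single (φ : A →+ k) (g : Multiplicative A) (r : k) :
    eulerDerivation φ (single g r) = φ (toAdd g) • single g r :=
  eulerMap_single φ g r

end Euler

section Derivations

variable {k G : Type*} [CommRing k] [CommMonoid G]

theorem derivation_ext {D₁ D₂ : Derivation k k[G] k[G]} (h : ∀ g, D₁ (of k G g) = D₂ (of k G g)) :
    D₁ = D₂ :=
  Derivation.ext fun a ↦ LinearMap.congr_fun
    ((MonoidAlgebra.basis G k).ext (f₁ := D₁.toLinearMap) (f₂ := D₂.toLinearMap) h) a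

def IsAutInvariant (D : Derivation k k[G] k[G]) : Prop :=
  ∀ σ : MulAut G, ∀ a, domCongr k k σ (D ((domCongr k k σ).symm a)) = D a

theorem isAutInvariant_iff {D : Derivation k k[G] k[G]} :
    IsAutInvariant D ↔ ∀ (σ : MulAut G) a, domCongr k k σ (D a) = D (domCongr k k σ a) := by
  refine forall_congr' fun σ ↦ ⟨fun h a ↦ ?_, fun h a ↦ by rw [h, AlgEquiv.apply_symm_apply]⟩
  have := h (domCongr k k σ a)
  rwa [AlgEquiv.symm_apply_apply] at this

theorem IsAutInvariant.iteratePrime (p : ℕ) [Fact p.Prime] [CharP k[G] p]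
    {D : Derivation k k[G] k[G]} (hD : IsAutInvariant D) : IsAutInvariant (D.iteratePrime p) := by
  rw [isAutInvariant_iff] at hD ⊢
  intro σ a
  rw [Derivation.coe_iteratePrime]
  exact Function.Commute.iterate_right (f := domCongr k k σ) (g := D) (hD σ) p a

end Derivations

theorem derivation_ext_zmod {k : Type*} [CommRing k] {n : ℕ} [NeZero n]
    {D₁ D₂ : Derivation k k[Multiplicative (ZMod n)] k[Multiplicative (ZMod n)]}
    (h : D₁ (of k _ (ofAdd 1)) = D₂ (of k _ (ofAdd 1))) : D₁ = D₂ :=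
  derivation_ext fun g ↦ by
    have hg : g = ofAdd 1 ^ (toAdd g).val := by
      rw [← ofAdd_nsmul, nsmul_one, ZMod.natCast_zmod_val, ofAdd_toAdd]
    rw [hg, map_pow, Derivation.leibniz_pow, Derivation.leibniz_pow, h]

section FiniteSums

variable {k : Type*} [Semiring k]

theorem coeff_sum_single_ofAdd {A : Type*} [AddCommMonoid A] [Fintype A] (f : A → k) (c : A) :
    (∑ a, single (ofAdd a) (f a)).coeff (ofAdd c) = f c := by
  classical
  simp [coeff_sum, coeff_single, Finsupp.single_apply]

theorem sum_single_ofAdd_mul_sum_single_ofAdd {A : Type*} [AddCommGroup A] [Fintype A]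
    (f g : A → k) :
    (∑ a, single (ofAdd a) (f a)) * ∑ a, single (ofAdd a) (g a)
      = ∑ t, single (ofAdd t) (∑ b, f b * g (t - b)) := by
  calc (∑ a, single (ofAdd a) (f a)) * ∑ a, single (ofAdd a) (g a)
      = ∑ b, ∑ t, single (ofAdd t) (f b * g (t - b)) := by
        simp only [sum_mul_sum, single_mul_single]
        exact sum_congr rfl fun b _ ↦ Fintype.sum_equiv (Equiv.addLeft b) _ _ fun a ↦ by simp
    _ = _ := by
        rw [sum_comm]
        simp only [← singleAddHom_apply, ← map_sum]

variable (k) in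
noncomputable def normElement (n : ℕ) [NeZero n] : k[Multiplicative (ZMod n)] :=
  ∑ a : ZMod n, single (ofAdd a) 1

theorem normElement_ne_zero [Nontrivial k] {n : ℕ} [NeZero n] : normElement k n ≠ 0 := by
  intro h
  have h0 : (normElement k n).coeff (ofAdd 0) = 0 := by rw [h]; rfl
  rw [normElement, coeff_sum_single_ofAdd] at h0
  exact one_ne_zero h0

end FiniteSums

section Prime

variable {p : ℕ} [Fact p.Prime] {k : Type*} [Field k] [CharP k p]

local notation "κ" => ZMod.castHom (dvd_refl p) k

local notation "P" => Multiplicative (ZMod p)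

theorem domCongr_eq_smul_iff (σ : MulAut P) (f : k[P]) :
    domCongr k k σ f = κ (ZMod.autScalar σ) • f ↔
      ∀ b, f.coeff (ofAdd b) = κ (ZMod.autScalar σ) * f.coeff (ofAdd (b * ZMod.autScalar σ)) := by
  set s := ZMod.autScalar σ
  have hσ : ∀ b, (domCongr k k σ f).coeff (ofAdd (b * s)) = f.coeff (ofAdd b) := fun b ↦ by
    rw [coeff_domCongr, ← ZMod.mulAut_apply_ofAdd, MulEquiv.symm_apply_apply]
  refine ⟨fun h b ↦ by rw [← hσ, h, coeff_smul_apply, smul_eq_mul], fun h ↦ ?_⟩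
  ext g
  obtain ⟨b, rfl⟩ : ∃ b, g = ofAdd (b * s) := ⟨toAdd g * s⁻¹, by
    rw [inv_mul_cancel_right₀ (ZMod.autScalar_ne_zero σ), ofAdd_toAdd]⟩
  rw [hσ, coeff_smul_apply, smul_eq_mul, h]

variable (p k) in
noncomputable abbrev zmodEuler : Derivation k k[P] k[P] := eulerDerivation (κ : ZMod p →+ k)

theorem zmodEuler_domCongr (σ : MulAut P) (a : k[P]) :
    zmodEuler p k (domCongr k k σ a) = κ (ZMod.autScalar σ) • domCongr k k σ (zmodEuler p k a) := by
  induction a using MonoidAlgebra.induction_linear with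
  | zero => simp
  | add f g hf hg => simp only [map_add, hf, hg, smul_add]
  | single g r =>
    obtain ⟨z, rfl⟩ := ofAdd.surjective g
    rw [domCongr_single, eulerDerivation_single, eulerDerivation_single, map_smul, domCongr_single,
      smul_smul, ZMod.mulAut_apply_ofAdd σ z, toAdd_ofAdd, toAdd_ofAdd, AddMonoidHom.coe_coe,
      map_mul, mul_comm]

theorem zmodEuler_of_ofAdd_one : zmodEuler p k (of k _ (ofAdd 1)) = of k _ (ofAdd 1) := by
  rw [of_apply, eulerDerivation_single, toAdd_ofAdd, AddMonoidHom.coe_coe, map_one, one_smul]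

theorem isAutInvariant_smul_zmodEuler_iff (f : k[P]) :
    IsAutInvariant (f • zmodEuler p k) ↔
      ∀ σ : MulAut P, domCongr k k σ f = κ (ZMod.autScalar σ) • f := by
  simp only [isAutInvariant_iff, Derivation.smul_apply, smul_eq_mul, map_mul, zmodEuler_domCongr,
    mul_smul_comm, ← smul_mul_assoc]
  refine forall_congr' fun σ ↦ ⟨fun h ↦ ?_, fun h a ↦ by rw [h]⟩
  have hx := h (of k _ (ofAdd 1))
  have hu : IsUnit (domCongr k k σ (of k _ (ofAdd (1 : ZMod p)))) :=
    ((Group.isUnit (ofAdd (1 : ZMod p))).map (of k _)).map _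
  rwa [zmodEuler_of_ofAdd_one, hu.mul_left_inj] at hx

theorem exists_eq_smul_zmodEuler (D : Derivation k k[P] k[P]) :
    ∃ f : k[P], D = f • zmodEuler p k := by
  refine ⟨D (of k _ (ofAdd 1)) * of k _ (ofAdd (-1)), derivation_ext_zmod ?_⟩
  rw [Derivation.smul_apply, zmodEuler_of_ofAdd_one, smul_eq_mul, mul_assoc, ← map_mul,
    ← ofAdd_add, neg_add_cancel, ofAdd_zero, (of k _).map_one, mul_one]

-- The coefficient of `x^0` is `0⁻¹ = 0`, which is what invariance forces for `p` odd.
variable (p k) in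
noncomputable def invSum : k[P] := ∑ b : ZMod p, single (ofAdd b) (κ b⁻¹)

theorem eq_smul_invSum (hp2 : p ≠ 2) (f : k[P])
    (hf : ∀ σ : MulAut P, domCongr k k σ f = κ (ZMod.autScalar σ) • f) :
    f = f.coeff (ofAdd 1) • invSum p k := by
  have hcoeff := fun σ ↦ (domCongr_eq_smul_iff σ f).1 (hf σ)
  ext g
  rw [← ofAdd_toAdd g, coeff_smul_apply, smul_eq_mul, invSum, coeff_sum_single_ofAdd]
  by_cases hc : toAdd g = 0
  · obtain ⟨σ, hσ⟩ := ZMod.exists_autScalar_eq (neg_ne_zero.2 (one_ne_zero (α := ZMod p)))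
    have h0 := hcoeff σ 0
    rw [hσ, zero_mul, map_neg, map_one, neg_one_mul, eq_comm,
      Ring.eq_self_iff_eq_zero_of_char_ne_two (by rwa [ringChar.eq k p])] at h0
    rw [hc, h0, inv_zero, map_zero, mul_zero]
  · obtain ⟨σ, hσ⟩ := ZMod.exists_autScalar_eq hc
    rw [hcoeff σ 1, hσ, one_mul, map_inv₀, mul_comm, inv_mul_cancel_left₀ ((map_ne_zero κ).2 hc)]

theorem domCongr_invSum (σ : MulAut P) :
    domCongr k k σ (invSum p k) = κ (ZMod.autScalar σ) • invSum p k :=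
  (domCongr_eq_smul_iff σ _).2 fun b ↦ by
    rw [invSum, coeff_sum_single_ofAdd, coeff_sum_single_ofAdd, mul_inv, map_mul, mul_left_comm,
      map_inv₀ κ (ZMod.autScalar σ), mul_inv_cancel₀ ((map_ne_zero κ).2 (ZMod.autScalar_ne_zero σ)),
      mul_one]

variable (p k) in
noncomputable def fixedDerivation : Derivation k k[P] k[P] :=
  invSum p k • zmodEuler p k

theorem isAutInvariant_fixedDerivation : IsAutInvariant (fixedDerivation p k) :=
  (isAutInvariant_smul_zmodEuler_iff _).2 domCongr_invSum

theorem IsAutInvariant.exists_eq_smul_fixedDerivation (hp2 : p ≠ 2) {D : Derivation k k[P] k[P]}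
    (hD : IsAutInvariant D) : ∃ c : k, D = c • fixedDerivation p k := by
  obtain ⟨f, rfl⟩ := exists_eq_smul_zmodEuler D
  refine ⟨f.coeff (ofAdd 1), ?_⟩
  rw [fixedDerivation, ← smul_assoc,
    ← eq_smul_invSum hp2 f ((isAutInvariant_smul_zmodEuler_iff f).1 hD)]

theorem fixedDerivation_ne_zero : fixedDerivation p k ≠ 0 := by
  intro h
  have hx := DFunLike.congr_fun h (of k _ (ofAdd 1))
  have hu : IsUnit (of k P (ofAdd 1)) := (Group.isUnit _).map _
  rw [fixedDerivation, Derivation.smul_apply, zmodEuler_of_ofAdd_one, smul_eq_mul,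
    Derivation.zero_apply, hu.mul_left_eq_zero] at hx
  have h1 : (invSum p k).coeff (ofAdd 1) = 0 := by rw [hx]; rfl
  rw [invSum, coeff_sum_single_ofAdd, inv_one, map_one] at h1
  exact one_ne_zero h1

theorem fixedDerivation_normElement (hp2 : p ≠ 2) :
    fixedDerivation p k (normElement k p) = normElement k p := by
  rw [fixedDerivation, Derivation.smul_apply, smul_eq_mul, normElement, map_sum]
  simp only [eulerDerivation_single, smul_single', mul_one, toAdd_ofAdd, AddMonoidHom.coe_coe]
  rw [invSum, sum_single_ofAdd_mul_sum_single_ofAdd]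
  refine sum_congr rfl fun t _ ↦ ?_
  rw [← map_one κ, ← ZMod.sum_inv_mul_sub_eq_one hp2 t]
  simp only [map_sum, map_mul]

theorem fixedDerivation_pow (hp2 : p ≠ 2) :
    (fixedDerivation p k).toLinearMap ^ p = (fixedDerivation p k).toLinearMap := by
  have : CharP k[P] p := charP_of_injective_algebraMap' k p
  have hinv : IsAutInvariant ((fixedDerivation p k).iteratePrime p) :=
    isAutInvariant_fixedDerivation.iteratePrime p
  obtain ⟨c, hc⟩ := hinv.exists_eq_smul_fixedDerivation hp2
  have hN : (fixedDerivation p k).iteratePrime p (normElement k p) = normElement k p := by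
    rw [Derivation.coe_iteratePrime]
    exact Function.iterate_fixed (fixedDerivation_normElement hp2) p
  rw [hc, Derivation.smul_apply, fixedDerivation_normElement hp2] at hN
  have hc1 : c = 1 := smul_left_injective k normElement_ne_zero (hN.trans (one_smul k _).symm)
  rw [← Derivation.toLinearMap_iteratePrime, hc, hc1, one_smul]

end Prime

end MonoidAlgebra

theorem fixed_derivations_one_dimensional_p_toral_general
    (p : ℕ) (hp : p.Prime) (hodd : p ≠ 2)
    (k : Type*) [Field k] [CharP k p] :
    ∃ D : Derivation k (MonoidAlgebra k (Multiplicative (ZMod p)))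
        (MonoidAlgebra k (Multiplicative (ZMod p))),
      D ≠ 0 ∧
      (∀ σ : MulAut (Multiplicative (ZMod p)),
        ∀ a, MonoidAlgebra.domCongr k k σ (D ((MonoidAlgebra.domCongr k k σ).symm a)) = D a) ∧
      (∀ D' : Derivation k (MonoidAlgebra k (Multiplicative (ZMod p)))
          (MonoidAlgebra k (Multiplicative (ZMod p))),
        (∀ σ : MulAut (Multiplicative (ZMod p)),
          ∀ a, MonoidAlgebra.domCongr k k σ (D' ((MonoidAlgebra.domCongr k k σ).symm a)) = D' a)
          → ∃ c : k, D' = c • D) ∧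
      (D.toLinearMap ^ p = D.toLinearMap) := by
  have := Fact.mk hp
  exact ⟨fixedDerivation p k, fixedDerivation_ne_zero, isAutInvariant_fixedDerivation,
    fun _ ↦ IsAutInvariant.exists_eq_smul_fixedDerivation hodd, fixedDerivation_pow hodd⟩

/-- Let `p` be an odd prime, `P = ⟨x⟩` cyclic of order `p`, and
`E = Aut(P)` (cyclic of order `p − 1`).  Then the fixed-point space `Der_k(kP)^E` is
one-dimensional over `k`, spanned by a derivation `D` with `D^{∘p} = D`; that is,
`HH¹(kP)^E ≅ Der_k(kP)^E` has a `p`-toral basis.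
(`P` is realised as `Multiplicative (ZMod p)`; an automorphism `σ` acts on a derivation `D`
by `a ↦ σ(D(σ⁻¹(a)))`, where `σ` also denotes the induced algebra automorphism of `kP`.) -/
theorem fixed_derivations_one_dimensional_p_toral
    (p : ℕ) (hp : p.Prime) (hodd : p ≠ 2)
    (k : Type*) [Field k] [CharP k p] [IsAlgClosed k] :
    ∃ D : Derivation k (MonoidAlgebra k (Multiplicative (ZMod p)))
        (MonoidAlgebra k (Multiplicative (ZMod p))),
      D ≠ 0 ∧
      (∀ σ : MulAut (Multiplicative (ZMod p)),
        ∀ a, MonoidAlgebra.domCongr k k σ (D ((MonoidAlgebra.domCongr k k σ).symm a)) = D a) ∧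
      (∀ D' : Derivation k (MonoidAlgebra k (Multiplicative (ZMod p)))
          (MonoidAlgebra k (Multiplicative (ZMod p))),
        (∀ σ : MulAut (Multiplicative (ZMod p)),
          ∀ a, MonoidAlgebra.domCongr k k σ (D' ((MonoidAlgebra.domCongr k k σ).symm a)) = D' a)
          → ∃ c : k, D' = c • D) ∧
      (D.toLinearMap ^ p = D.toLinearMap) :=
  fixed_derivations_one_dimensional_p_toral_general p hp hodd k
end

section
/- Let p be an odd prime, P = ⟨x⟩ cyclic of order p, k an algebraically closed field of characteristic p, and set w = Σ_{i=1}^{p−1} i^{−1} x^i ∈ kP, where i^{−1} is the inverse of i in k. Then: (a) w lies in the Jacobson radical J(kP); (b) w does not lie in J(kP)^2, so w generates J(kP) as an ideal; (c) w^p = 0; and (d) the set {1, w, w^2, …, w^{p−1}} is a k-basis of kP. -/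
open MonoidAlgebra

/-!
Put `u = x - 1`. In characteristic `p`, `u ^ p = x ^ p - 1 = 0`, and expanding
`x ^ n = (1 + u) ^ n` shows that `1, u, …, u ^ (p - 1)` span `kP`; as `dim kP = p` they are a
basis, so `u ^ (p - 1) ≠ 0` and every element is a scalar plus a multiple of `u`. Since `u` is
nilpotent and nonzero scalars are units, this makes `(u) = J(kP)`.

Write `w = f(x)` with `f = ∑ X ^ i / i`. To first order at `1`, `w ≡ f(1) + f'(1) u mod u²`,
where `f(1) = ∑ 1 / i = 0` (pair `i` with `p - i`, `p` odd) and `f'(1) = p - 1 = -1`. Hence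
`w = u v` with `v ≡ -1 mod u` a unit. So `(w) = (u) = J`, `w ^ p = 0 ≠ w ^ (p - 1)`, the minimal
polynomial of `w` is `X ^ p`, giving the basis, and a nonzero nilpotent `w` never lies in `(w²)`.
-/

open Polynomial in
theorem Polynomial.aeval_add_sub_mem_span_sq {R S : Type*} [CommSemiring R] [CommRing S]
    [Algebra R S] (f : R[X]) (x u : S) :
    aeval (x + u) f - (aeval x f + aeval x (derivative f) * u) ∈ Ideal.span {u ^ 2} := by
  rw [← Ideal.Quotient.eq_zero_iff_mem]
  have hsq : Ideal.Quotient.mkₐ R (Ideal.span {u ^ 2}) u ^ 2 = 0 := by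
    rw [← map_pow, Ideal.Quotient.mkₐ_eq_mk, Ideal.Quotient.eq_zero_iff_mem]
    exact Ideal.mem_span_singleton_self _
  rw [← Ideal.Quotient.mkₐ_eq_mk R, map_sub, map_add, map_mul, ← aeval_algHom_apply,
    ← aeval_algHom_apply, ← aeval_algHom_apply, map_add, aeval_add_of_sq_eq_zero f _ _ hsq,
    sub_self]

theorem IsNilpotent.eq_zero_of_mem_span_singleton_sq {R : Type*} [CommRing R] {w : R}
    (hw : IsNilpotent w) (h : w ∈ Ideal.span {w ^ 2}) : w = 0 := by
  obtain ⟨t, ht⟩ := Ideal.mem_span_singleton'.1 h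
  have hunit : IsUnit (1 - t * w) := ((Commute.all t w).isNilpotent_mul_left hw).isUnit_one_sub
  exact hunit.mul_left_eq_zero.1 (by linear_combination -ht)

open Polynomial in
theorem linearIndependent_pow_of_pow_eq_zero {K A : Type*} [Field K] [Ring A] [Algebra K A]
    {w : A} {n : ℕ} (hn : w ^ n = 0) (hn' : w ^ (n - 1) ≠ 0) :
    LinearIndependent K fun i : Fin n => w ^ (i : ℕ) := by
  have hint : IsIntegral K w := ⟨X ^ n, monic_X_pow n, by simp [hn]⟩
  obtain ⟨m, hmn, hassoc⟩ := (dvd_prime_pow prime_X n).1 (minpoly.dvd K w (by simp [hn]))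
  have hmin : minpoly K w = X ^ m :=
    eq_of_monic_of_associated (minpoly.monic hint) (monic_X_pow m) hassoc
  have hwm : w ^ m = 0 := by simpa [hmin] using minpoly.aeval K w
  have hm : m = n := le_antisymm hmn <| by
    by_contra! h
    exact hn' (pow_eq_zero_of_le (by omega) hwm)
  have hli := linearIndependent_pow (K := K) w
  rwa [hmin, natDegree_X_pow, hm] at hli

theorem one_add_pow_mem_span_pow {K A : Type*} [CommSemiring K] [CommSemiring A] [Algebra K A]
    (u : A) {n m : ℕ} (h : n < m) :
    (1 + u) ^ n ∈ Submodule.span K (Set.range fun i : Fin m => u ^ (i : ℕ)) := by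
  rw [add_comm, add_pow]
  refine Submodule.sum_mem _ fun j hj => ?_
  have hjm : j < m := by rw [Finset.mem_range] at hj; omega
  rw [one_pow, mul_one, mul_comm, ← nsmul_eq_mul]
  exact Submodule.smul_of_tower_mem _ _ (Submodule.subset_span ⟨⟨j, hjm⟩, rfl⟩)

theorem exists_sub_algebraMap_mem_span_singleton {K A : Type*} [CommSemiring K] [CommRing A]
    [Algebra K A] {u : A} {m : ℕ}
    (h : Submodule.span K (Set.range fun i : Fin m => u ^ (i : ℕ)) = ⊤) (a : A) :
    ∃ c : K, a - algebraMap K A c ∈ Ideal.span {u} := by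
  have ha : a ∈ Submodule.span K (Set.range fun i : Fin m => u ^ (i : ℕ)) := h ▸ trivial
  induction ha using Submodule.span_induction with
  | mem x hx =>
    obtain ⟨⟨_ | j, _⟩, rfl⟩ := hx
    · exact ⟨1, by simp⟩
    · exact ⟨0, by simpa using Ideal.mem_span_singleton.2 (dvd_pow_self u j.succ_ne_zero)⟩
  | zero => exact ⟨0, by simp⟩
  | add x y _ _ hx hy =>
    obtain ⟨c, hc⟩ := hx
    obtain ⟨d, hd⟩ := hy
    exact ⟨c + d, by convert add_mem hc hd using 1; rw [map_add]; ring⟩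
  | smul r x _ hx =>
    obtain ⟨c, hc⟩ := hx
    refine ⟨r * c, ?_⟩
    convert Ideal.mul_mem_left _ (algebraMap K A r) hc using 1
    rw [map_mul, Algebra.smul_def]
    ring

theorem Ideal.jacobson_bot_eq_span_singleton {K A : Type*} [Field K] [CommRing A] [Nontrivial A]
    [Algebra K A] {u : A} (hu : IsNilpotent u)
    (h : ∀ a : A, ∃ c : K, a - algebraMap K A c ∈ Ideal.span {u}) :
    (⊥ : Ideal A).jacobson = Ideal.span {u} := by
  have hle : Ideal.span {u} ≤ (⊥ : Ideal A).jacobson :=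
    Ideal.span_le.2 <| Set.singleton_subset_iff.2 <|
      Ideal.radical_le_jacobson (mem_nilradical.2 hu)
  refine le_antisymm (fun a ha => ?_) hle
  obtain ⟨c, hc⟩ := h a
  obtain rfl : c = 0 := by
    by_contra hc0
    have hmem : algebraMap K A c ∈ (⊥ : Ideal A).jacobson := by
      simpa using sub_mem ha (hle hc)
    exact (Ideal.jacobson_eq_top_iff.not.2 bot_ne_top)
      (Ideal.eq_top_of_isUnit_mem _ hmem ((Ne.isUnit hc0).map _))
  simpa using hc

theorem sum_Ico_inv_natCast_eq_zero {p : ℕ} {k : Type*} [Field k] [CharP k p] (hp : Odd p) :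
    ∑ i ∈ Finset.Ico 1 p, (i : k)⁻¹ = 0 := by
  obtain ⟨m, rfl⟩ := hp
  refine Finset.sum_involution (fun i _ => 2 * m + 1 - i) (fun i hi => ?_)
    (fun i hi _ => by simp only [Finset.mem_Ico] at hi; omega)
    (fun i hi => by simp only [Finset.mem_Ico] at hi ⊢; omega)
    (fun i hi => by simp only [Finset.mem_Ico] at hi; omega)
  rw [Finset.mem_Ico] at hi
  rw [Nat.cast_sub hi.2.le, CharP.cast_eq_zero k (2 * m + 1), zero_sub, inv_neg, add_neg_cancel]

theorem sum_Ico_inv_natCast_mul_natCast {p : ℕ} {k : Type*} [Field k] [CharP k p]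
    (hp : p.Prime) : ∑ i ∈ Finset.Ico 1 p, (i : k)⁻¹ * i = -1 := by
  have hne : ∀ i ∈ Finset.Ico 1 p, (i : k) ≠ 0 := fun i hi => by
    rw [Finset.mem_Ico] at hi
    rw [Ne, CharP.cast_eq_zero_iff k p i]
    exact Nat.not_dvd_of_pos_of_lt hi.1 hi.2
  rw [Finset.sum_congr rfl fun i hi => inv_mul_cancel₀ (hne i hi), Finset.sum_const,
    Nat.card_Ico, nsmul_one, Nat.cast_sub hp.one_lt.le, CharP.cast_eq_zero, Nat.cast_one,
    zero_sub]

theorem Module.finrank_monoidAlgebra {k G : Type*} [Semiring k] [StrongRankCondition k]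
    [Fintype G] : Module.finrank k (MonoidAlgebra k G) = Fintype.card G :=
  Module.finrank_eq_card_basis (MonoidAlgebra.basis G k)

namespace MonoidAlgebra

noncomputable def cyclicGen (p : ℕ) (k : Type*) [Semiring k] :
    MonoidAlgebra k (Multiplicative (ZMod p)) :=
  of k _ (Multiplicative.ofAdd 1)

variable {p : ℕ} {k : Type*}

theorem cyclicGen_pow [Semiring k] (n : ℕ) :
    cyclicGen p k ^ n = of k _ (Multiplicative.ofAdd (n : ZMod p)) := by
  rw [cyclicGen, ← map_pow, ← ofAdd_nsmul, nsmul_one]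

theorem of_eq_cyclicGen_pow [Semiring k] [NeZero p] (g : Multiplicative (ZMod p)) :
    of k _ g = cyclicGen p k ^ g.toAdd.val := by
  rw [cyclicGen_pow, ZMod.natCast_zmod_val, ofAdd_toAdd]

theorem span_cyclicGen_sub_one_pow_eq_top [CommRing k] [NeZero p] :
    Submodule.span k (Set.range fun i : Fin p => (cyclicGen p k - 1) ^ (i : ℕ)) = ⊤ := by
  rw [eq_top_iff, ← (MonoidAlgebra.basis _ k).span_eq, Submodule.span_le]
  rintro _ ⟨g, rfl⟩
  have h := one_add_pow_mem_span_pow (K := k) (cyclicGen p k - 1) (ZMod.val_lt g.toAdd)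
  rwa [add_sub_cancel, ← of_eq_cyclicGen_pow] at h

variable [Field k]

theorem cyclicGen_sub_one_pow_eq_zero [Fact p.Prime] [CharP k p] :
    (cyclicGen p k - 1) ^ p = 0 := by
  have := charP_of_injective_algebraMap' k (A := MonoidAlgebra k (Multiplicative (ZMod p))) p
  rw [sub_pow_char, cyclicGen_pow, ZMod.natCast_self, ofAdd_zero, map_one, one_pow, sub_self]

theorem cyclicGen_sub_one_pow_pred_ne_zero [NeZero p] :
    (cyclicGen p k - 1) ^ (p - 1) ≠ 0 := by
  have hli := linearIndependent_of_top_le_span_of_card_eq_finrank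
    (span_cyclicGen_sub_one_pow_eq_top (p := p) (k := k)).ge
    (by simp [Module.finrank_monoidAlgebra])
  simpa using hli.ne_zero ⟨p - 1, Nat.sub_lt (NeZero.pos p) one_pos⟩

theorem jacobson_bot_eq_span_cyclicGen_sub_one [Fact p.Prime] [CharP k p] :
    (⊥ : Ideal (MonoidAlgebra k (Multiplicative (ZMod p)))).jacobson =
      Ideal.span {cyclicGen p k - 1} :=
  Ideal.jacobson_bot_eq_span_singleton ⟨p, cyclicGen_sub_one_pow_eq_zero⟩
    (exists_sub_algebraMap_mem_span_singleton (K := k) span_cyclicGen_sub_one_pow_eq_top)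

open Polynomial in
theorem associated_cyclicGen_sub_one_sum_inv_smul_of [Fact p.Prime] [CharP k p] (hodd : p ≠ 2) :
    Associated (cyclicGen p k - 1) (∑ i ∈ Finset.Ico 1 p,
      ((i : k))⁻¹ • of k (Multiplicative (ZMod p)) (Multiplicative.ofAdd (i : ZMod p))) := by
  set u := cyclicGen p k - 1
  set f : k[X] := ∑ i ∈ Finset.Ico 1 p, C (i : k)⁻¹ * X ^ i
  have hw : ∑ i ∈ Finset.Ico 1 p,
      ((i : k))⁻¹ • of k (Multiplicative (ZMod p)) (Multiplicative.ofAdd (i : ZMod p)) =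
        aeval (1 + u) f := by
    simp [f, u, cyclicGen_pow, Algebra.smul_def]
  have hf : f.eval 1 = 0 := by
    simpa [f, eval_finsetSum] using
      sum_Ico_inv_natCast_eq_zero (k := k) ((Fact.out : p.Prime).odd_of_ne_two hodd)
  have hf' : (derivative f).eval 1 = -1 := by
    simpa [f, derivative_X_pow, eval_finsetSum] using
      sum_Ico_inv_natCast_mul_natCast (k := k) Fact.out
  obtain ⟨t, ht⟩ :=
    Ideal.mem_span_singleton'.1 (aeval_add_sub_mem_span_sq f (algebraMap k _ 1) u)
  rw [aeval_algebraMap_apply_eq_algebraMap_eval, aeval_algebraMap_apply_eq_algebraMap_eval, hf,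
    hf', map_one, map_zero, map_neg, map_one] at ht
  have hu : IsNilpotent u := ⟨p, cyclicGen_sub_one_pow_eq_zero⟩
  refine ⟨(((Commute.all u t).isNilpotent_mul_right hu).isUnit_sub_one).unit, ?_⟩
  rw [hw, IsUnit.unit_spec]
  linear_combination ht

end MonoidAlgebra

theorem radical_generator_cyclic_p_general
    (p : ℕ) (hp : p.Prime) (hodd : p ≠ 2)
    (k : Type*) [Field k] [CharP k p] :
    ∀ w : MonoidAlgebra k (Multiplicative (ZMod p)),
      w = ∑ i ∈ Finset.Ico 1 p,
            ((i : k))⁻¹ • MonoidAlgebra.of k (Multiplicative (ZMod p))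
              (Multiplicative.ofAdd (i : ZMod p)) →
      w ∈ (⊥ : Ideal (MonoidAlgebra k (Multiplicative (ZMod p)))).jacobson ∧
      w ∉ ((⊥ : Ideal (MonoidAlgebra k (Multiplicative (ZMod p)))).jacobson) ^ 2 ∧
      Ideal.span {w} = (⊥ : Ideal (MonoidAlgebra k (Multiplicative (ZMod p)))).jacobson ∧
      w ^ p = 0 ∧
      LinearIndependent k (fun n : Fin p => w ^ (n : ℕ)) ∧
      Submodule.span k (Set.range fun n : Fin p => w ^ (n : ℕ)) = ⊤ := by
  have : Fact p.Prime := ⟨hp⟩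
  rintro w rfl
  obtain ⟨v, hv⟩ := associated_cyclicGen_sub_one_sum_inv_smul_of (k := k) hodd
  rw [← hv]
  set u := cyclicGen p k - 1
  have hJ : (⊥ : Ideal (MonoidAlgebra k (Multiplicative (ZMod p)))).jacobson =
      Ideal.span {u * v} := by
    rw [jacobson_bot_eq_span_cyclicGen_sub_one, Ideal.span_singleton_mul_right_unit v.isUnit]
  have hpow : (u * v) ^ p = 0 := by rw [mul_pow, cyclicGen_sub_one_pow_eq_zero, zero_mul]
  have hpred : (u * v) ^ (p - 1) ≠ 0 := by
    rw [mul_pow]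
    exact mt (v.isUnit.pow _).mul_left_eq_zero.1 cyclicGen_sub_one_pow_pred_ne_zero
  have hli := linearIndependent_pow_of_pow_eq_zero (K := k) hpow hpred
  refine ⟨hJ ▸ Ideal.mem_span_singleton_self _, ?_, hJ.symm, hpow, hli,
    hli.span_eq_top_of_card_eq_finrank (by simp [Module.finrank_monoidAlgebra])⟩
  rw [hJ, Ideal.span_singleton_pow]
  intro h
  apply hpred
  rw [IsNilpotent.eq_zero_of_mem_span_singleton_sq ⟨p, hpow⟩ h,
    zero_pow (Nat.sub_ne_zero_of_lt hp.one_lt)]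

/-- Let `p` be an odd prime, `P = ⟨x⟩` cyclic of order `p`, `k` an
algebraically closed field of characteristic `p`, and `w = Σ_{i=1}^{p−1} i⁻¹ xⁱ ∈ kP`
(inverses taken in `k`).  Then (a) `w` lies in the Jacobson radical `J(kP)`;
(b) `w ∉ J(kP)²`, and indeed `w` generates `J(kP)` as an ideal; (c) `w ^ p = 0`; and
(d) `{1, w, w², …, w^{p−1}}` is a `k`-basis of `kP`. -/
theorem radical_generator_cyclic_p
    (p : ℕ) (hp : p.Prime) (hodd : p ≠ 2)
    (k : Type*) [Field k] [CharP k p] [IsAlgClosed k] :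
    ∀ w : MonoidAlgebra k (Multiplicative (ZMod p)),
      w = ∑ i ∈ Finset.Ico 1 p,
            ((i : k))⁻¹ • MonoidAlgebra.of k (Multiplicative (ZMod p))
              (Multiplicative.ofAdd (i : ZMod p)) →
      w ∈ (⊥ : Ideal (MonoidAlgebra k (Multiplicative (ZMod p)))).jacobson ∧
      w ∉ ((⊥ : Ideal (MonoidAlgebra k (Multiplicative (ZMod p)))).jacobson) ^ 2 ∧
      Ideal.span {w} = (⊥ : Ideal (MonoidAlgebra k (Multiplicative (ZMod p)))).jacobson ∧
      w ^ p = 0 ∧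
      LinearIndependent k (fun n : Fin p => w ^ (n : ℕ)) ∧
      Submodule.span k (Set.range fun n : Fin p => w ^ (n : ℕ)) = ⊤ :=
  radical_generator_cyclic_p_general p hp hodd k
end

section
/- Let p be an odd prime, P = ⟨x⟩ cyclic of order p, and E = ⟨y⟩ ≤ Aut(P) of order p−1 with y·x = x^s. Set w = Σ_{i=1}^{p−1} i^{−1} x^i ∈ kP. Then the algebra automorphism of kP induced by y sends w to s·w, and the E-fixed derivation D_0 = Σ_{z∈E} z∘d_0∘z^{−1} (the E-orbit sum of the derivation d_0 : x ↦ 1) satisfies D_0(w) = w. -/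
open MonoidAlgebra Subgroup

/-- Let `p` be an odd prime, `P = ⟨x⟩` cyclic of order `p`, and
`E = ⟨y⟩ ≤ Aut(P)` of order `p − 1` with `y·x = x^s`.  Set `w = Σ_{i=1}^{p−1} i⁻¹ xⁱ ∈ kP`.
Then the algebra automorphism of `kP` induced by `y` sends `w` to `s·w`, and the `E`-fixed
derivation `D_0 = Σ_{z ∈ E} z ∘ d_0 ∘ z⁻¹` (the `E`-orbit sum of the derivation
`d_0 : x ↦ 1`) satisfies `D_0(w) = w`.
(`P` is realised as `Multiplicative (ZMod p)` and `y` as the automorphism `σ` of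
multiplication by `s` on exponents, so that `E = {σ⁰, …, σ^{p−2}}`.) -/
theorem orbit_sum_derivation_fixes_w
    (p : ℕ) (hp : p.Prime) (hodd : p ≠ 2)
    (k : Type*) [Field k] [CharP k p] [IsAlgClosed k]
    (s : ℕ) (hcop : s.Coprime p)
    (hord : orderOf (ZMod.unitOfCoprime s hcop) = p - 1)
    (σ : MulAut (Multiplicative (ZMod p)))
    (hσ : ∀ a : ZMod p, σ (Multiplicative.ofAdd a) = Multiplicative.ofAdd ((s : ZMod p) * a))
    (w : MonoidAlgebra k (Multiplicative (ZMod p)))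
    (hw : w = ∑ i ∈ Finset.Ico 1 p,
        ((i : k))⁻¹ • MonoidAlgebra.of k (Multiplicative (ZMod p))
          (Multiplicative.ofAdd (i : ZMod p)))
    (d₀ : Derivation k (MonoidAlgebra k (Multiplicative (ZMod p)))
      (MonoidAlgebra k (Multiplicative (ZMod p))))
    (hd₀ : d₀ (MonoidAlgebra.of k (Multiplicative (ZMod p))
      (Multiplicative.ofAdd (1 : ZMod p))) = 1)
    (D₀ : Derivation k (MonoidAlgebra k (Multiplicative (ZMod p)))
      (MonoidAlgebra k (Multiplicative (ZMod p))))
    (hD₀ : ∀ a, D₀ a =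
      ∑ i ∈ Finset.range (p - 1),
        MonoidAlgebra.domCongr k k (σ ^ i)
          (d₀ ((MonoidAlgebra.domCongr k k (σ ^ i)).symm a))) :
    MonoidAlgebra.domCongr k k σ w = (s : k) • w ∧ D₀ w = w := by
  haveI : Fact p.Prime := ⟨hp⟩
  set X : ZMod p → MonoidAlgebra k (Multiplicative (ZMod p)) :=
    fun t => MonoidAlgebra.of k (Multiplicative (ZMod p)) (Multiplicative.ofAdd t) with hXdef
  set φ : ZMod p →+* k := ZMod.castHom (dvd_refl p) k with hφdef
  set c : ZMod p → k := fun t => (φ t)⁻¹ with hcdef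
  have hsne : (s : ZMod p) ≠ 0 := by
    have := (ZMod.unitOfCoprime s hcop).ne_zero
    rwa [ZMod.coe_unitOfCoprime] at this
  have hφs : φ (s : ZMod p) = (s : k) := map_natCast φ s
  have hske : (s : k) ≠ 0 := by
    rw [← hφs]; exact (map_ne_zero φ).mpr hsne
  have hp3 : 3 ≤ p := hp.two_le.lt_of_ne (Ne.symm hodd)
  -- rewrite w as a sum over all of ZMod p
  have hw' : w = ∑ t : ZMod p, c t • X t := by
    rw [hw]
    rw [show Finset.Ico 1 p = Finset.Ico 1 p from rfl]
    have h1 : ∑ i ∈ Finset.Ico 1 p, ((i : k))⁻¹ • X ((i : ZMod p))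
        = ∑ i ∈ Finset.range p, ((i : k))⁻¹ • X ((i : ZMod p)) := by
      rw [Finset.range_eq_Ico]
      apply Finset.sum_subset (Finset.Ico_subset_Ico (Nat.zero_le 1) le_rfl)
      intro i hi hni
      have : i = 0 := by
        simp only [Finset.mem_Ico] at hi hni
        omega
      subst this
      simp
    rw [h1]
    refine Finset.sum_nbij' (fun i => (i : ZMod p)) (fun t => t.val) ?_ ?_ ?_ ?_ ?_
    · intro i _; exact Finset.mem_univ _
    · intro t _; exact Finset.mem_range.mpr (ZMod.val_lt t)
    · intro i hi; exact ZMod.val_cast_of_lt (Finset.mem_range.mp hi)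
    · intro t _; exact ZMod.natCast_rightInverse t
    · intro i _
      congr 1
      rw [hcdef]
      simp only
      rw [map_natCast φ]
  -- X is multiplicative on exponents
  have hXmul : ∀ a b : ZMod p, X a * X b = X (a + b) := by
    intro a b
    rw [hXdef]
    simp only
    rw [← map_mul, ← ofAdd_add]
  have hX0 : X 0 = 1 := by rw [hXdef]; simp only; rw [ofAdd_zero, map_one]
  -- powers of σ
  have hσpow : ∀ (i : ℕ) (a : ZMod p), (σ ^ i) (Multiplicative.ofAdd a)
      = Multiplicative.ofAdd (((s : ZMod p)) ^ i * a) := by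
    intro i
    induction i with
    | zero => intro a; simp
    | succ n ih =>
      intro a
      rw [pow_succ', MulAut.mul_apply, ih, hσ]
      ring_nf
  have hdomX : ∀ (i : ℕ) (a : ZMod p),
      MonoidAlgebra.domCongr k k (σ ^ i) (X a) = X (((s : ZMod p)) ^ i * a) := by
    intro i a
    rw [hXdef]
    simp only [MonoidAlgebra.of_apply]
    rw [MonoidAlgebra.domCongr_single, hσpow]
  -- the key reindexing lemma
  have hgen : ∀ r : ZMod p, r ≠ 0 → (∑ t : ZMod p, c t • X (r * t)) = φ r • w := by
    intro r hr
    rw [hw', Finset.smul_sum]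
    have key : ∀ t : ZMod p, c t • X (r * t) = (φ r * c (r * t)) • X (r * t) := by
      intro t
      congr 1
      rw [hcdef]
      simp only
      rw [map_mul, mul_inv, ← mul_assoc, mul_inv_cancel₀ ((map_ne_zero φ).mpr hr), one_mul]
    calc ∑ t : ZMod p, c t • X (r * t) = ∑ t : ZMod p, (φ r * c (r * t)) • X (r * t) :=
          Finset.sum_congr rfl (fun t _ => key t)
      _ = ∑ u : ZMod p, (φ r * c u) • X u :=
          Fintype.sum_equiv (Equiv.mulLeft₀ r hr) _ _ (fun t => rfl)
      _ = ∑ u : ZMod p, φ r • (c u • X u) := by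
          apply Finset.sum_congr rfl; intro u _; rw [smul_smul]
  
  -- part 1 (generalized to powers)
  have part1i : ∀ i : ℕ, MonoidAlgebra.domCongr k k (σ ^ i) w = ((s : k) ^ i) • w := by
    intro i
    have hrne : ((s : ZMod p)) ^ i ≠ 0 := pow_ne_zero _ hsne
    calc MonoidAlgebra.domCongr k k (σ ^ i) w
        = ∑ t : ZMod p, c t • X (((s : ZMod p)) ^ i * t) := by
          rw [hw', map_sum]
          apply Finset.sum_congr rfl
          intro t _
          rw [map_smul, hdomX]
      _ = φ (((s : ZMod p)) ^ i) • w := hgen _ hrne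
      _ = ((s : k) ^ i) • w := by rw [map_pow, hφs]
  have part1 : MonoidAlgebra.domCongr k k σ w = (s : k) • w := by
    have := part1i 1
    rwa [pow_one, pow_one] at this
  refine ⟨part1, ?_⟩
  -- symm action on w
  have hsymm : ∀ i : ℕ, (MonoidAlgebra.domCongr k k (σ ^ i)).symm w = (((s : k)) ^ i)⁻¹ • w := by
    intro i
    rw [AlgEquiv.symm_apply_eq, map_smul, part1i, smul_smul,
      inv_mul_cancel₀ (pow_ne_zero _ hske), one_smul]
  -- derivation on powers of x
  have hd : ∀ n : ℕ, d₀ (X ((n : ZMod p))) = (n : k) • X ((n : ZMod p) - 1) := by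
    intro n
    induction n with
    | zero => simp only [Nat.cast_zero]; rw [hX0]; simp
    | succ n ih =>
      have hcast : ((n + 1 : ℕ) : ZMod p) = (n : ZMod p) + 1 := by push_cast; ring
      rw [hcast, ← hXmul, Derivation.leibniz]
      have h1 : d₀ (X 1) = 1 := hd₀
      rw [h1, ih]
      rw [smul_eq_mul, smul_eq_mul, mul_one, mul_smul_comm, hXmul]
      have : (1 : ZMod p) + ((n : ZMod p) - 1) = (n : ZMod p) := by ring
      rw [this, Nat.cast_succ, add_smul, one_smul, add_comm,
        show (n : ZMod p) + 1 - 1 = (n : ZMod p) by ring]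
  have hd' : ∀ t : ZMod p, d₀ (X t) = φ t • X (t - 1) := by
    intro t
    have h1 : ((t.val : ℕ) : ZMod p) = t := ZMod.natCast_rightInverse t
    have h2 : φ t = ((t.val : ℕ) : k) := by rw [hφdef, ZMod.castHom_apply, ZMod.natCast_val]
    rw [← h1, hd, h1, h2]
  -- the sum over all group elements
  set A : MonoidAlgebra k (Multiplicative (ZMod p)) := ∑ t : ZMod p, X t with hAdef
  have hdw : d₀ w = A - X (-1) := by
    have step1 : d₀ w = ∑ t : ZMod p, (c t * φ t) • X (t - 1) := by
      rw [hw', map_sum]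
      apply Finset.sum_congr rfl
      intro t _
      rw [Derivation.map_smul, hd', smul_smul]
    have step2 : ∑ t : ZMod p, (c t * φ t) • X (t - 1)
        = ∑ t ∈ Finset.univ.erase (0 : ZMod p), X (t - 1) := by
      rw [← Finset.sum_erase (Finset.univ) (f := fun t => (c t * φ t) • X (t - 1)) (a := 0) ?h0]
      case h0 => rw [hcdef]; simp
      apply Finset.sum_congr rfl
      intro t ht
      have htne : t ≠ 0 := Finset.ne_of_mem_erase ht
      rw [hcdef]
      simp only
      rw [inv_mul_cancel₀ ((map_ne_zero φ).mpr htne), one_smul]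
    have step3 : ∑ t ∈ Finset.univ.erase (0 : ZMod p), X (t - 1)
        = ∑ u ∈ Finset.univ.erase (-1 : ZMod p), X u := by
      refine Finset.sum_nbij' (fun t => t - 1) (fun u => u + 1) ?_ ?_ ?_ ?_ ?_
      · intro t ht
        refine Finset.mem_erase.mpr ⟨?_, Finset.mem_univ _⟩
        have := Finset.ne_of_mem_erase ht
        intro h; apply this; linear_combination h
      · intro u hu
        refine Finset.mem_erase.mpr ⟨?_, Finset.mem_univ _⟩
        have := Finset.ne_of_mem_erase hu
        intro h; apply this; linear_combination h
      · intro t _; ring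
      · intro u _; ring
      · intro t _; rfl
    have step4 : ∑ u ∈ Finset.univ.erase (-1 : ZMod p), X u = A - X (-1) := by
      rw [hAdef, eq_sub_iff_add_eq]
      exact Finset.sum_erase_add _ _ (Finset.mem_univ _)
    rw [step1, step2, step3, step4]
  -- σ^i fixes A
  have hA : ∀ i : ℕ, MonoidAlgebra.domCongr k k (σ ^ i) A = A := by
    intro i
    rw [hAdef, map_sum]
    have : ∀ t : ZMod p, MonoidAlgebra.domCongr k k (σ ^ i) (X t) = X (((s : ZMod p)) ^ i * t) :=
      hdomX i
    calc ∑ t : ZMod p, MonoidAlgebra.domCongr k k (σ ^ i) (X t)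
        = ∑ t : ZMod p, X (((s : ZMod p)) ^ i * t) := Finset.sum_congr rfl (fun t _ => this t)
      _ = ∑ t : ZMod p, X t :=
          Fintype.sum_equiv (Equiv.mulLeft₀ _ (pow_ne_zero i hsne)) _ _ (fun t => rfl)
  -- geometric sum vanishes
  have hs1 : (s : k) ≠ 1 := by
    intro h
    have h2 : (s : ZMod p) = 1 := by
      have hφ1 : φ (s : ZMod p) = φ 1 := by rw [hφs, map_one, h]
      exact RingHom.injective φ hφ1
    have h3 : ZMod.unitOfCoprime s hcop = 1 := Units.ext (by rw [ZMod.coe_unitOfCoprime, h2]; rfl)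
    rw [h3, orderOf_one] at hord
    omega
  have hspow : ((s : k))⁻¹ ^ (p - 1) = 1 := by
    have : ((s : ZMod p)) ^ (p - 1) = 1 := ZMod.pow_card_sub_one_eq_one hsne
    have h2 : ((s : k)) ^ (p - 1) = 1 := by
      rw [← hφs, ← map_pow, this, map_one]
    rw [inv_pow, h2, inv_one]
  have hgeo : ∑ i ∈ Finset.range (p - 1), ((s : k))⁻¹ ^ i = 0 := by
    have hne1 : ((s : k))⁻¹ ≠ 1 := by
      intro h
      apply hs1
      rw [← inv_inv ((s : k)), h, inv_one]
    rw [geom_sum_eq hne1, hspow, sub_self, zero_div]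
  -- the reindexing of the final sum
  have hreidx : ∑ i ∈ Finset.range (p - 1), (((s : k))⁻¹ ^ i) • X (-((s : ZMod p)) ^ i) = -w := by
    have hwer : w = ∑ t ∈ Finset.univ.erase (0 : ZMod p), c t • X t := by
      rw [hw', ← Finset.sum_erase (Finset.univ) (a := (0:ZMod p))]
      rw [hcdef]; simp
    rw [hwer, ← Finset.sum_neg_distrib]
    set u : (ZMod p)ˣ := ZMod.unitOfCoprime s hcop with hu
    have hcard : Fintype.card (ZMod p)ˣ = p - 1 := ZMod.card_units p
    have hutop : Subgroup.zpowers u = ⊤ := by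
      apply Subgroup.eq_top_of_card_eq
      rw [Nat.card_eq_fintype_card, Nat.card_eq_fintype_card, Fintype.card_zpowers, hord, hcard]
    refine Finset.sum_nbij (fun i => -((s : ZMod p)) ^ i) ?_ ?_ ?_ ?_
    · intro i _
      refine Finset.mem_erase.mpr ⟨?_, Finset.mem_univ _⟩
      simp [pow_ne_zero i hsne]
    · intro i hi j hj hij
      simp only [Finset.coe_range, Set.mem_Iio] at hi hj
      have h2 : ((s : ZMod p)) ^ i = ((s : ZMod p)) ^ j := by
        linear_combination -hij
      have h3 : u ^ i = u ^ j := by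
        apply Units.ext
        push_cast [hu, ZMod.coe_unitOfCoprime]
        exact h2
      have h4 := pow_eq_pow_iff_modEq.mp h3
      rw [hord] at h4
      have := Nat.ModEq.eq_of_lt_of_lt h4 hi hj
      exact this
    · intro t ht
      have htne : t ≠ 0 := (Finset.mem_erase.mp ht).1
      have hv : (-t) ≠ 0 := neg_ne_zero.mpr htne
      set v : (ZMod p)ˣ := Units.mk0 (-t) hv with hv'
      have hvmem : v ∈ Submonoid.powers u := mem_powers_iff_mem_zpowers.mpr (by rw [hutop]; trivial)
      obtain ⟨n, hn⟩ := hvmem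
      have hn' : u ^ n = v := hn
      refine ⟨n % (p - 1), ?_, ?_⟩
      · simp only [Finset.coe_range, Set.mem_Iio]
        exact Nat.mod_lt _ (by omega)
      · have h5 : u ^ (n % (p - 1)) = v := by rw [← hord, pow_mod_orderOf, hn']
        have h6 : ((s : ZMod p)) ^ (n % (p - 1)) = -t := by
          have := congrArg (Units.val) h5
          push_cast [hu, ZMod.coe_unitOfCoprime] at this
          rw [this, hv']; rfl
        show -((s : ZMod p)) ^ (n % (p - 1)) = t
        rw [h6]; ring
    · intro i _
      have hc : c (-((s : ZMod p)) ^ i) = -(((s : k))⁻¹ ^ i) := by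
        rw [hcdef]
        simp only
        rw [map_neg, map_pow, hφs, inv_neg, inv_pow]
      show (((s : k))⁻¹ ^ i) • X (-((s : ZMod p)) ^ i)
          = -(c (-((s : ZMod p)) ^ i) • X (-((s : ZMod p)) ^ i))
      rw [hc, neg_smul, neg_neg]
  -- final assembly
  rw [hD₀ w]
  have step : ∀ i ∈ Finset.range (p - 1),
      MonoidAlgebra.domCongr k k (σ ^ i) (d₀ ((MonoidAlgebra.domCongr k k (σ ^ i)).symm w))
      = (((s : k))⁻¹ ^ i) • A - (((s : k))⁻¹ ^ i) • X (-((s : ZMod p)) ^ i) := by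
    intro i _
    rw [hsymm i, Derivation.map_smul, hdw, map_smul, map_sub, hA, hdomX, inv_pow, smul_sub]
    congr 2
    ring
  rw [Finset.sum_congr rfl step, Finset.sum_sub_distrib, ← Finset.sum_smul, hgeo, zero_smul,
    hreidx, zero_sub, neg_neg]
end

section
/- Let k be an algebraically closed field of characteristic 2, P = ⟨x⟩ × ⟨y⟩ ≅ C_2 × C_2, and E = ⟨r⟩ ≅ C_3 the subgroup of Aut(P) with r·x = xy and r·y = x (so P⋊E ≅ A_4). Let D_x be the derivation of kP with D_x(x) = 1 + y and D_x(y) = 1 + xy, and let D_y be the derivation with D_y(x) = 1 + xy and D_y(y) = 1 + x. Then D_x and D_y are E-fixed, the set {D_x, D_y} is a k-basis of Der_k(kP)^E, and [D_x, D_y] = 0; in particular Der_k(kP)^E is a 2-dimensional abelian Lie algebra. -/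
/-! A derivation `D` fixed by `σ = domCongr r` commutes with `σ`, so its value `u = D x` determines
`D (xy) = σ u` and `D y = σ² u`; the Leibniz rule at `xy` then forces `σ u = x σ²u + y u`.
Comparing the coefficients of `1` and `xy` gives `u = c (1 + y) + d (1 + xy)`, that is
`D = c D_x + d D_y`. That `D_x`, `D_y` are fixed and commute is a computation on the generators,
using `x² = y² = 1` and `2 = 0`. -/

open MonoidAlgebra

namespace Derivation

variable {R A : Type*} [CommSemiring R] [CommSemiring A] [Algebra R A]

def conj (σ : A ≃ₐ[R] A) : Derivation R A A →ₗ[R] Derivation R A A where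
  toFun D :=
    { toLinearMap := (σ : A →ₗ[R] A) ∘ₗ (D : A →ₗ[R] A) ∘ₗ (σ.symm : A →ₗ[R] A)
      map_one_eq_zero' := by simp
      leibniz' a b := by simp }
  map_add' _ _ := by ext; simp
  map_smul' _ _ := by ext; simp

@[simp]
theorem conj_apply (σ : A ≃ₐ[R] A) (D : Derivation R A A) (a : A) :
    conj σ D a = σ (D (σ.symm a)) := rfl

end Derivation

section FixedDerivations

variable {R A : Type*} [CommSemiring R] [CommSemiring A] [Algebra R A]

def fixedDerivations (σ : A ≃ₐ[R] A) : Submodule R (Derivation R A A) :=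
  LinearMap.eqLocus (Derivation.conj σ) LinearMap.id

variable {σ : A ≃ₐ[R] A} {D : Derivation R A A}

theorem mem_fixedDerivations : D ∈ fixedDerivations σ ↔ Derivation.conj σ D = D := Iff.rfl

theorem mem_fixedDerivations_iff : D ∈ fixedDerivations σ ↔ ∀ a, σ (D (σ.symm a)) = D a := by
  simp [mem_fixedDerivations, Derivation.ext_iff]

theorem mem_fixedDerivations_iff_map_apply :
    D ∈ fixedDerivations σ ↔ ∀ a, D (σ a) = σ (D a) := by
  rw [mem_fixedDerivations_iff]
  exact ⟨fun h a => by simpa using (h (σ a)).symm, fun h a => by simp [← h]⟩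

theorem fixedDerivations_symm : fixedDerivations σ.symm = fixedDerivations σ := by
  ext D
  rw [mem_fixedDerivations_iff, mem_fixedDerivations_iff_map_apply]
  simp only [AlgEquiv.symm_symm, AlgEquiv.symm_apply_eq]

end FixedDerivations

namespace MonoidAlgebra

variable {k G : Type*} [CommSemiring k] [CommMonoid G]

theorem adjoin_image_of_eq_top {S : Set G} (hS : Submonoid.closure S = ⊤) :
    Algebra.adjoin k (of k G '' S) = ⊤ := by
  rw [Set.image_eq_range, Algebra.adjoin_range_eq_range_aeval, AlgHom.range_eq_top]
  exact mvPolynomial_aeval_of_surjective_of_closure hS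

theorem derivation_ext_of_closure_eq_top {M : Type*} [AddCommMonoid M] [Module k M]
    [Module k[G] M] [IsScalarTower k k[G] M] {S : Set G} (hS : Submonoid.closure S = ⊤)
    {D₁ D₂ : Derivation k k[G] M} (h : ∀ s ∈ S, D₁ (of k G s) = D₂ (of k G s)) : D₁ = D₂ :=
  Derivation.ext_of_adjoin_eq_top _ (adjoin_image_of_eq_top hS) <| by
    rintro _ ⟨s, hs, rfl⟩
    exact h s hs

theorem domCongr_of {H : Type*} [CommMonoid H] (e : G ≃* H) (g : G) :
    domCongr k k e (of k G g) = of k H (e g) := by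
  simp

theorem two_eq_zero {k G : Type*} [CommRing k] [CharP k 2] [Monoid G] : (2 : k[G]) = 0 := by
  have h : (2 : k) = 0 := CharTwo.two_eq_zero
  rw [← map_ofNat (algebraMap k k[G]), h, map_zero]

end MonoidAlgebra

namespace KleinFour

abbrev P := Multiplicative (ZMod 2 × ZMod 2)

abbrev x : P := .ofAdd (1, 0)

abbrev y : P := .ofAdd (0, 1)

def rotation : MulAut P where
  toFun g := .ofAdd (g.toAdd.1 + g.toAdd.2, g.toAdd.1)
  invFun g := .ofAdd (g.toAdd.2, g.toAdd.1 + g.toAdd.2)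
  left_inv := by decide
  right_inv := by decide
  map_mul' := by decide

theorem eq_one_or_x_or_y_or_xy (g : P) : g = 1 ∨ g = x ∨ g = y ∨ g = x * y := by
  revert g; decide

theorem closure_x_y : Submonoid.closure {x, y} = ⊤ := by
  refine eq_top_iff.2 fun g _ => ?_
  have hx : x ∈ Submonoid.closure {x, y} := Submonoid.subset_closure (by simp)
  have hy : y ∈ Submonoid.closure {x, y} := Submonoid.subset_closure (by simp)
  rcases eq_one_or_x_or_y_or_xy g with rfl | rfl | rfl | rfl
  exacts [one_mem _, hx, hy, mul_mem hx hy]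

theorem eq_rotation (r : MulAut P) (hx : r x = x * y) (hy : r y = x) : r = rotation := by
  ext g : 1
  rcases eq_one_or_x_or_y_or_xy g with rfl | rfl | rfl | rfl
  · simp
  · exact hx
  · exact hy
  · rw [map_mul, hx, hy]; rfl

variable {k : Type*} [CommRing k]

theorem of_mul_self (g : P) : of k P g * of k P g = 1 := by
  rw [← map_mul, ← map_one (of k P)]
  congr 1
  revert g; decide

theorem domCongr_rotation_of_x : domCongr k k rotation (of k P x) = of k P x * of k P y := by
  rw [domCongr_of, ← map_mul]; rfl

theorem domCongr_rotation_of_y : domCongr k k rotation (of k P y) = of k P x := by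
  rw [domCongr_of]; rfl

theorem derivation_ext {D₁ D₂ : Derivation k k[P] k[P]} (hx : D₁ (of k P x) = D₂ (of k P x))
    (hy : D₁ (of k P y) = D₂ (of k P y)) : D₁ = D₂ :=
  derivation_ext_of_closure_eq_top closure_x_y <| by
    simpa only [Set.mem_insert_iff, Set.mem_singleton_iff, forall_eq_or_imp, forall_eq] using
      ⟨hx, hy⟩

theorem apply_of_x_mul_of_y (D : Derivation k k[P] k[P]) :
    D (of k P x * of k P y) = of k P x * D (of k P y) + of k P y * D (of k P x) := by
  rw [Derivation.leibniz, smul_eq_mul, smul_eq_mul]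

variable {D D₁ D₂ : Derivation k k[P] k[P]}

theorem mem_fixedDerivations_rotation_of_apply
    (hx : D (of k P x * of k P y) = domCongr k k rotation (D (of k P x)))
    (hy : D (of k P x) = domCongr k k rotation (D (of k P y))) :
    D ∈ fixedDerivations (domCongr k k rotation) := by
  rw [← fixedDerivations_symm, mem_fixedDerivations]
  apply derivation_ext <;>
    simp only [Derivation.conj_apply, AlgEquiv.symm_symm, domCongr_rotation_of_x,
      domCongr_rotation_of_y, hx, hy, AlgEquiv.symm_apply_apply]

theorem apply_of_y_of_mem_fixedDerivations (hD : D ∈ fixedDerivations (domCongr k k rotation)) :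
    D (of k P y) = domCongr k k rotation (domCongr k k rotation (D (of k P x))) := by
  have hy : of k P y = domCongr k k rotation (domCongr k k rotation (of k P x)) := by
    rw [domCongr_of, domCongr_of]; rfl
  rw [hy, mem_fixedDerivations_iff_map_apply.1 hD, mem_fixedDerivations_iff_map_apply.1 hD]

theorem eq_of_mem_fixedDerivations_of_apply_x (h₁ : D₁ ∈ fixedDerivations (domCongr k k rotation))
    (h₂ : D₂ ∈ fixedDerivations (domCongr k k rotation)) (h : D₁ (of k P x) = D₂ (of k P x)) :
    D₁ = D₂ :=
  derivation_ext h <| by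
    rw [apply_of_y_of_mem_fixedDerivations h₁, apply_of_y_of_mem_fixedDerivations h₂, h]

theorem rotation_equation_of_mem_fixedDerivations
    (hD : D ∈ fixedDerivations (domCongr k k rotation)) :
    domCongr k k rotation (D (of k P x)) =
      of k P x * domCongr k k rotation (domCongr k k rotation (D (of k P x))) +
        of k P y * D (of k P x) := by
  calc domCongr k k rotation (D (of k P x))
      _ = D (domCongr k k rotation (of k P x)) := (mem_fixedDerivations_iff_map_apply.1 hD _).symm
      _ = _ := by
        rw [domCongr_rotation_of_x, apply_of_x_mul_of_y, apply_of_y_of_mem_fixedDerivations hD]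

theorem eq_of_rotation_equation (u : k[P])
    (h : domCongr k k rotation u =
      of k P x * domCongr k k rotation (domCongr k k rotation u) + of k P y * u) :
    u = u.coeff y • (1 + of k P y) + u.coeff (x * y) • (1 + of k P x * of k P y) := by
  -- after `simp`, the two sides agree up to evaluating closed group elements, which `exact` does
  have h₁ : u.coeff 1 = u.coeff (x * y) + u.coeff y := by
    have := congr(($h).coeff 1)
    simp only [coeff_domCongr, coeff_add, Finsupp.add_apply, of_apply, coeff_single_mul_apply,
      one_mul] at this
    exact this
  have h₂ : u.coeff x = u.coeff x + u.coeff x := by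
    have := congr(($h).coeff (x * y))
    simp only [coeff_domCongr, coeff_add, Finsupp.add_apply, of_apply, coeff_single_mul_apply,
      one_mul] at this
    exact this
  have h₃ : u.coeff x = 0 := by simpa using h₂
  ext g
  rcases eq_one_or_x_or_y_or_xy g with rfl | rfl | rfl | rfl <;>
    simp +decide [coeff_add, one_def, h₁, h₃, add_comm]

theorem eq_smul_add_smul_of_mem_fixedDerivations {Dx Dy : Derivation k k[P] k[P]}
    (hDx : Dx ∈ fixedDerivations (domCongr k k rotation))
    (hDy : Dy ∈ fixedDerivations (domCongr k k rotation))
    (hDxx : Dx (of k P x) = 1 + of k P y) (hDyx : Dy (of k P x) = 1 + of k P x * of k P y)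
    (hD : D ∈ fixedDerivations (domCongr k k rotation)) :
    D = (D (of k P x)).coeff y • Dx + (D (of k P x)).coeff (x * y) • Dy := by
  refine eq_of_mem_fixedDerivations_of_apply_x hD
    (add_mem (Submodule.smul_mem _ _ hDx) (Submodule.smul_mem _ _ hDy)) ?_
  rw [Derivation.add_apply, Derivation.smul_apply, Derivation.smul_apply, hDxx, hDyx]
  exact eq_of_rotation_equation _ (rotation_equation_of_mem_fixedDerivations hD)

theorem linearIndependent_of_apply_x (h₁ : D₁ (of k P x) = 1 + of k P y)
    (h₂ : D₂ (of k P x) = 1 + of k P x * of k P y) : LinearIndependent k ![D₁, D₂] := by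
  refine LinearIndependent.pair_iff.2 fun s t hst => ?_
  have h := congr($hst (of k P x))
  rw [Derivation.add_apply, Derivation.smul_apply, Derivation.smul_apply, h₁, h₂] at h
  exact ⟨by simpa +decide [coeff_add, one_def] using congr(($h).coeff y),
    by simpa +decide [coeff_add, one_def] using congr(($h).coeff (x * y))⟩

section CharTwo

variable [CharP k 2]

theorem apply_of_x_mul_of_y_eq_one_add_of_x (hx : D (of k P x) = 1 + of k P y)
    (hy : D (of k P y) = 1 + of k P x * of k P y) : D (of k P x * of k P y) = 1 + of k P x := by
  rw [apply_of_x_mul_of_y, hx, hy]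
  linear_combination of k P y * of_mul_self (k := k) x + of_mul_self (k := k) y +
    of k P y * MonoidAlgebra.two_eq_zero (k := k) (G := P)

theorem apply_of_x_mul_of_y_eq_one_add_of_y (hx : D (of k P x) = 1 + of k P x * of k P y)
    (hy : D (of k P y) = 1 + of k P x) : D (of k P x * of k P y) = 1 + of k P y := by
  rw [apply_of_x_mul_of_y, hx, hy]
  linear_combination of_mul_self (k := k) x + of k P x * of_mul_self (k := k) y +
    of k P x * MonoidAlgebra.two_eq_zero (k := k) (G := P)

theorem mem_fixedDerivations_of_apply_x_eq_one_add_of_y (hx : D (of k P x) = 1 + of k P y)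
    (hy : D (of k P y) = 1 + of k P x * of k P y) :
    D ∈ fixedDerivations (domCongr k k rotation) := by
  refine mem_fixedDerivations_rotation_of_apply ?_ ?_
  · rw [apply_of_x_mul_of_y_eq_one_add_of_x hx hy, hx, map_add, map_one, domCongr_rotation_of_y]
  · rw [hx, hy, map_add, map_one, map_mul, domCongr_rotation_of_x, domCongr_rotation_of_y]
    linear_combination -(of k P y * of_mul_self (k := k) x)

theorem mem_fixedDerivations_of_apply_x_eq_one_add_of_x_mul_of_y
    (hx : D (of k P x) = 1 + of k P x * of k P y) (hy : D (of k P y) = 1 + of k P x) :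
    D ∈ fixedDerivations (domCongr k k rotation) := by
  refine mem_fixedDerivations_rotation_of_apply ?_ ?_
  · rw [apply_of_x_mul_of_y_eq_one_add_of_y hx hy, hx, map_add, map_one, map_mul,
      domCongr_rotation_of_x, domCongr_rotation_of_y]
    linear_combination -(of k P y * of_mul_self (k := k) x)
  · rw [hx, hy, map_add, map_one, domCongr_rotation_of_x]

theorem lie_eq_zero_of_apply {Dx Dy : Derivation k k[P] k[P]}
    (hDxx : Dx (of k P x) = 1 + of k P y) (hDxy : Dx (of k P y) = 1 + of k P x * of k P y)
    (hDyx : Dy (of k P x) = 1 + of k P x * of k P y) (hDyy : Dy (of k P y) = 1 + of k P x) :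
    ⁅Dx, Dy⁆ = 0 :=
  derivation_ext
    (by
      rw [Derivation.commutator_apply, hDyx, hDxx, map_add, map_add,
        apply_of_x_mul_of_y_eq_one_add_of_x hDxx hDxy, hDyy]
      simp only [Derivation.map_one_eq_zero, zero_add, sub_self, Derivation.zero_apply])
    (by
      rw [Derivation.commutator_apply, hDyy, hDxy, map_add, map_add,
        apply_of_x_mul_of_y_eq_one_add_of_y hDyx hDyy, hDxx]
      simp only [Derivation.map_one_eq_zero, zero_add, sub_self, Derivation.zero_apply])

end CharTwo

end KleinFour

theorem kleinFour_fixed_derivations_abelian_general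
    (k : Type*) [Field k] [CharP k 2]
    (r : MulAut (Multiplicative (ZMod 2 × ZMod 2)))
    (hrx : r (Multiplicative.ofAdd ((1 : ZMod 2), (0 : ZMod 2))) =
      Multiplicative.ofAdd ((1 : ZMod 2), (0 : ZMod 2)) *
        Multiplicative.ofAdd ((0 : ZMod 2), (1 : ZMod 2)))
    (hry : r (Multiplicative.ofAdd ((0 : ZMod 2), (1 : ZMod 2))) =
      Multiplicative.ofAdd ((1 : ZMod 2), (0 : ZMod 2)))
    (Dx Dy : Derivation k (MonoidAlgebra k (Multiplicative (ZMod 2 × ZMod 2)))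
      (MonoidAlgebra k (Multiplicative (ZMod 2 × ZMod 2))))
    (hDxx : Dx (MonoidAlgebra.of k _ (Multiplicative.ofAdd ((1 : ZMod 2), (0 : ZMod 2)))) =
      1 + MonoidAlgebra.of k _ (Multiplicative.ofAdd ((0 : ZMod 2), (1 : ZMod 2))))
    (hDxy : Dx (MonoidAlgebra.of k _ (Multiplicative.ofAdd ((0 : ZMod 2), (1 : ZMod 2)))) =
      1 + MonoidAlgebra.of k _ (Multiplicative.ofAdd ((1 : ZMod 2), (0 : ZMod 2))) *
        MonoidAlgebra.of k _ (Multiplicative.ofAdd ((0 : ZMod 2), (1 : ZMod 2))))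
    (hDyx : Dy (MonoidAlgebra.of k _ (Multiplicative.ofAdd ((1 : ZMod 2), (0 : ZMod 2)))) =
      1 + MonoidAlgebra.of k _ (Multiplicative.ofAdd ((1 : ZMod 2), (0 : ZMod 2))) *
        MonoidAlgebra.of k _ (Multiplicative.ofAdd ((0 : ZMod 2), (1 : ZMod 2))))
    (hDyy : Dy (MonoidAlgebra.of k _ (Multiplicative.ofAdd ((0 : ZMod 2), (1 : ZMod 2)))) =
      1 + MonoidAlgebra.of k _ (Multiplicative.ofAdd ((1 : ZMod 2), (0 : ZMod 2)))) :
    (∀ a, MonoidAlgebra.domCongr k k r (Dx ((MonoidAlgebra.domCongr k k r).symm a)) = Dx a) ∧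
    (∀ a, MonoidAlgebra.domCongr k k r (Dy ((MonoidAlgebra.domCongr k k r).symm a)) = Dy a) ∧
    LinearIndependent k ![Dx, Dy] ∧
    (Submodule.span k {Dx, Dy} : Set _) =
      {D : Derivation k (MonoidAlgebra k (Multiplicative (ZMod 2 × ZMod 2)))
          (MonoidAlgebra k (Multiplicative (ZMod 2 × ZMod 2))) |
        ∀ a, MonoidAlgebra.domCongr k k r (D ((MonoidAlgebra.domCongr k k r).symm a)) = D a} ∧
    ⁅Dx, Dy⁆ = 0 := by
  obtain rfl := KleinFour.eq_rotation r hrx hry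
  have hDx := KleinFour.mem_fixedDerivations_of_apply_x_eq_one_add_of_y hDxx hDxy
  have hDy := KleinFour.mem_fixedDerivations_of_apply_x_eq_one_add_of_x_mul_of_y hDyx hDyy
  have hspan : Submodule.span k {Dx, Dy} = fixedDerivations (domCongr k k KleinFour.rotation) :=
    le_antisymm (Submodule.span_le.2 (Set.insert_subset hDx (Set.singleton_subset_iff.2 hDy)))
      fun D hD => Submodule.mem_span_pair.2
        ⟨_, _, (KleinFour.eq_smul_add_smul_of_mem_fixedDerivations hDx hDy hDxx hDyx hD).symm⟩
  refine ⟨mem_fixedDerivations_iff.1 hDx, mem_fixedDerivations_iff.1 hDy,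
    KleinFour.linearIndependent_of_apply_x hDxx hDyx, ?_,
    KleinFour.lie_eq_zero_of_apply hDxx hDxy hDyx hDyy⟩
  rw [hspan]
  ext D
  exact mem_fixedDerivations_iff

/-- Let `k` be an algebraically closed field of characteristic 2,
`P = ⟨x⟩ × ⟨y⟩ ≅ C₂ × C₂`, and `E = ⟨r⟩ ≅ C₃ ≤ Aut(P)` with `r·x = xy`, `r·y = x`
(so `P ⋊ E ≅ A₄`).  Let `D_x` be the derivation of `kP` with `D_x(x) = 1 + y`,
`D_x(y) = 1 + xy`, and `D_y` the derivation with `D_y(x) = 1 + xy`, `D_y(y) = 1 + x`.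
Then `D_x, D_y` are `E`-fixed, `{D_x, D_y}` is a `k`-basis of `Der_k(kP)^E`, and
`⁅D_x, D_y⁆ = 0`; in particular `Der_k(kP)^E` is a 2-dimensional abelian Lie algebra.
(`P` is realised as `Multiplicative (ZMod 2 × ZMod 2)`; `E`-fixedness is fixedness under
the generator `r`, acting on derivations by `D ↦ r ∘ D ∘ r⁻¹`.) -/
theorem kleinFour_fixed_derivations_abelian
    (k : Type*) [Field k] [CharP k 2] [IsAlgClosed k]
    (r : MulAut (Multiplicative (ZMod 2 × ZMod 2)))
    (hrx : r (Multiplicative.ofAdd ((1 : ZMod 2), (0 : ZMod 2))) =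
      Multiplicative.ofAdd ((1 : ZMod 2), (0 : ZMod 2)) *
        Multiplicative.ofAdd ((0 : ZMod 2), (1 : ZMod 2)))
    (hry : r (Multiplicative.ofAdd ((0 : ZMod 2), (1 : ZMod 2))) =
      Multiplicative.ofAdd ((1 : ZMod 2), (0 : ZMod 2)))
    (Dx Dy : Derivation k (MonoidAlgebra k (Multiplicative (ZMod 2 × ZMod 2)))
      (MonoidAlgebra k (Multiplicative (ZMod 2 × ZMod 2))))
    (hDxx : Dx (MonoidAlgebra.of k _ (Multiplicative.ofAdd ((1 : ZMod 2), (0 : ZMod 2)))) =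
      1 + MonoidAlgebra.of k _ (Multiplicative.ofAdd ((0 : ZMod 2), (1 : ZMod 2))))
    (hDxy : Dx (MonoidAlgebra.of k _ (Multiplicative.ofAdd ((0 : ZMod 2), (1 : ZMod 2)))) =
      1 + MonoidAlgebra.of k _ (Multiplicative.ofAdd ((1 : ZMod 2), (0 : ZMod 2))) *
        MonoidAlgebra.of k _ (Multiplicative.ofAdd ((0 : ZMod 2), (1 : ZMod 2))))
    (hDyx : Dy (MonoidAlgebra.of k _ (Multiplicative.ofAdd ((1 : ZMod 2), (0 : ZMod 2)))) =
      1 + MonoidAlgebra.of k _ (Multiplicative.ofAdd ((1 : ZMod 2), (0 : ZMod 2))) *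
        MonoidAlgebra.of k _ (Multiplicative.ofAdd ((0 : ZMod 2), (1 : ZMod 2))))
    (hDyy : Dy (MonoidAlgebra.of k _ (Multiplicative.ofAdd ((0 : ZMod 2), (1 : ZMod 2)))) =
      1 + MonoidAlgebra.of k _ (Multiplicative.ofAdd ((1 : ZMod 2), (0 : ZMod 2)))) :
    (∀ a, MonoidAlgebra.domCongr k k r (Dx ((MonoidAlgebra.domCongr k k r).symm a)) = Dx a) ∧
    (∀ a, MonoidAlgebra.domCongr k k r (Dy ((MonoidAlgebra.domCongr k k r).symm a)) = Dy a) ∧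
    LinearIndependent k ![Dx, Dy] ∧
    (Submodule.span k {Dx, Dy} : Set _) =
      {D : Derivation k (MonoidAlgebra k (Multiplicative (ZMod 2 × ZMod 2)))
          (MonoidAlgebra k (Multiplicative (ZMod 2 × ZMod 2))) |
        ∀ a, MonoidAlgebra.domCongr k k r (D ((MonoidAlgebra.domCongr k k r).symm a)) = D a} ∧
    ⁅Dx, Dy⁆ = 0 :=
  kleinFour_fixed_derivations_abelian_general k r hrx hry Dx Dy hDxx hDxy hDyx hDyy
end
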